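/- arXiv:2109.09249 — 4 statements merged into one kernel-verified Lean document; each statement's English description precedes it below -/
import Mathlib

section
/- Let n ≥ 2 and let K_{1,n−1} be the star graph on n vertices. For every tree T on n vertices, the sum of the reciprocals of the n−1 nonzero eigenvalues of the combinatorial Laplacian of T is greater than or equal to the corresponding sum for K_{1,n−1}, with equality if and only if T is isomorphic to K_{1,n−1}. (This expresses that among all simple trees of a fixed size the star has the smallest average hitting time α.) -/
open scoped Classical

noncomputable section

/-- A weighted graph on vertex set `Fin n`: a simple graph together with a symmetric
weight function which is positive on edges and zero on non-edges. -/
structure WGraph (n : ℕ) where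
  G : SimpleGraph (Fin n)
  w : Fin n → Fin n → ℝ
  symm : ∀ u v, w u v = w v u
  pos : ∀ u v, G.Adj u v → 0 < w u v
  zero : ∀ u v, ¬ G.Adj u v → w u v = 0

namespace WGraph

variable {n : ℕ}

/-- The weighted degree `d_G(u) = Σ_v ω(uv)`. -/
def deg (T : WGraph n) (u : Fin n) : ℝ := ∑ v, T.w u v

/-- The volume of the whole graph: sum of all weighted degrees. -/
def vol (T : WGraph n) : ℝ := ∑ u, T.deg u

/-- The combinatorial Laplacian `L = D - A`. -/
def lap (T : WGraph n) : Matrix (Fin n) (Fin n) ℝ :=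
  Matrix.of fun u v => (if u = v then T.deg u else 0) - T.w u v

/-- The normalized Laplacian `𝓛 = D^{-1/2} L D^{-1/2}`. -/
def nlap (T : WGraph n) : Matrix (Fin n) (Fin n) ℝ :=
  Matrix.of fun u v => T.lap u v / (Real.sqrt (T.deg u) * Real.sqrt (T.deg v))

/-- The weight of an (unordered) edge. -/
def ew (T : WGraph n) : Sym2 (Fin n) → ℝ := Sym2.lift ⟨T.w, T.symm⟩

/-- `ω(H)`: the product of the weights of all edges of a (spanning) subgraph `H`. -/
def wOf (T : WGraph n) (H : SimpleGraph (Fin n)) : ℝ := ∏ᶠ e ∈ H.edgeSet, T.ew e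

/-- `τ(G)`: the sum of `ω(H)` over all spanning trees `H` of `G`. -/
def tau (T : WGraph n) : ℝ :=
  ∑ᶠ H ∈ {H : SimpleGraph (Fin n) | H ≤ T.G ∧ H.IsTree}, T.wOf H

/-- The multiset of edge-weights of a weighted graph. -/
def edgeWeights (T : WGraph n) : Multiset ℝ := T.G.edgeFinset.val.map T.ew

end WGraph

/-- The sum of the reciprocals of the nonzero eigenvalues of a hermitian real matrix
(in `ℝ`, `0⁻¹ = 0`, so the zero eigenvalues contribute nothing to the sum). -/
def sumInvEig {n : ℕ} (M : Matrix (Fin n) (Fin n) ℝ) : ℝ :=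
  if h : M.IsHermitian then ∑ i, (h.eigenvalues i)⁻¹ else 0

/-- `H` is a spanning 2-forest of `G`: an acyclic subgraph of `G` on the full
vertex set with exactly two connected components. -/
def IsTwoForestOf {n : ℕ} (G H : SimpleGraph (Fin n)) : Prop :=
  H ≤ G ∧ H.IsAcyclic ∧ Nat.card H.ConnectedComponent = 2

/-- `S(F)`: the product of the numbers of vertices of the components of `F`. -/
def SVal {n : ℕ} (F : SimpleGraph (Fin n)) : ℝ :=
  ∏ᶠ c : F.ConnectedComponent, (Nat.card c.supp : ℝ)

/-- `V_T(F)`: the product over the components of `F` of their volumes in `T`,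
i.e. of the sums of `T`-degrees of their vertices. -/
def VVal {n : ℕ} (T : WGraph n) (F : SimpleGraph (Fin n)) : ℝ :=
  ∏ᶠ c : F.ConnectedComponent, ∑ᶠ u ∈ c.supp, T.deg u

/-- The number of vertices of the connected component of `v` in `H`. -/
def compSize {n : ℕ} (H : SimpleGraph (Fin n)) (v : Fin n) : ℕ :=
  Nat.card ((H.connectedComponentMk v).supp)

/-- The volume of the connected component of `v` in `H`, computed intrinsically
(with the weights of `T`): the sum over vertices `u` of the component of the sum of
weights of edges of the component at `u`. -/
def compVol {n : ℕ} (T : WGraph n) (H : SimpleGraph (Fin n)) (v : Fin n) : ℝ :=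
  ∑ᶠ u ∈ (H.connectedComponentMk v).supp, ∑ᶠ x ∈ (H.connectedComponentMk v).supp, T.w u x

/-- The common part of the two edge-transfer operations: `T'` is obtained from `T` by
deleting the edge `e₂ = v₂v₃` and adding the edge `v₁v₃` carrying the weight of `e₂`,
where `e₁ = v₁v₂` and `e₂ = v₂v₃` are adjacent edges of `T`. -/
def EdgeTransferAux {n : ℕ} (T T' : WGraph n) (v1 v2 v3 : Fin n) : Prop :=
  T.G.Adj v1 v2 ∧ T.G.Adj v2 v3 ∧ v1 ≠ v3 ∧
  T'.G = T.G.deleteEdges {s(v2, v3)} ⊔ SimpleGraph.fromEdgeSet {s(v1, v3)} ∧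
  T'.w v1 v3 = T.w v2 v3 ∧
  (∀ u v : Fin n, s(u, v) ≠ s(v1, v3) → s(u, v) ≠ s(v2, v3) → T'.w u v = T.w u v)

/-- `T` edge-transfers to `T'` with respect to size (via `v₁, v₂, v₃`):
the component `T₁` of `T ∖ {e₁, e₂}` containing `v₁` has more vertices than the
component `T₂` containing `v₂`. -/
def EdgeTransferSize {n : ℕ} (T T' : WGraph n) (v1 v2 v3 : Fin n) : Prop :=
  EdgeTransferAux T T' v1 v2 v3 ∧
  compSize (T.G.deleteEdges {s(v1, v2), s(v2, v3)}) v2 <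
    compSize (T.G.deleteEdges {s(v1, v2), s(v2, v3)}) v1

/-- `T` edge-transfers to `T'` with respect to volume (via `v₁, v₂, v₃`):
the component `T₁` of `T ∖ {e₁, e₂}` containing `v₁` has larger intrinsic volume than
the component `T₂` containing `v₂`. -/
def EdgeTransferVol {n : ℕ} (T T' : WGraph n) (v1 v2 v3 : Fin n) : Prop :=
  EdgeTransferAux T T' v1 v2 v3 ∧
  compVol T (T.G.deleteEdges {s(v1, v2), s(v2, v3)}) v2 <
    compVol T (T.G.deleteEdges {s(v1, v2), s(v2, v3)}) v1

/-- Isomorphism of weighted graphs: a graph isomorphism preserving the weights. -/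
def WIso {n : ℕ} (T T' : WGraph n) : Prop :=
  ∃ f : T.G ≃g T'.G, ∀ u v, T'.w (f u) (f v) = T.w u v

/-- The star graph on `Fin n`, centered at the vertex `0`. -/
def starGraph (n : ℕ) : SimpleGraph (Fin n) :=
  SimpleGraph.fromRel fun u _ => u.val = 0

/-- `T` is a polarized weighted path: its underlying graph is a path
`v₁ v₂ … v_n` and, writing `e_i = v_i v_{i+1}` and `c(e_i) = min {i, n - i}`,
one has `ω(e_i) ≥ ω(e_j)` whenever `c(e_i) ≤ c(e_j)`. -/
def IsPolarizedPath {n : ℕ} (T : WGraph n) : Prop :=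
  ∃ f : SimpleGraph.pathGraph n ≃g T.G,
    ∀ (i j : ℕ) (hi : i + 1 < n) (hj : j + 1 < n),
      min (i + 1) (n - 1 - i) ≤ min (j + 1) (n - 1 - j) →
      T.w (f ⟨j, by omega⟩) (f ⟨j + 1, hj⟩) ≤ T.w (f ⟨i, by omega⟩) (f ⟨i + 1, hi⟩)

/-- Unweighted: adjacency indicator. -/
def adjW {n : ℕ} (G : SimpleGraph (Fin n)) (u v : Fin n) : ℝ := if G.Adj u v then 1 else 0

/-- Unweighted degree. -/
def degG {n : ℕ} (G : SimpleGraph (Fin n)) (u : Fin n) : ℝ := ∑ v, adjW G u v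

/-- The combinatorial Laplacian `L = D - A` of a simple graph. -/
def lapG {n : ℕ} (G : SimpleGraph (Fin n)) : Matrix (Fin n) (Fin n) ℝ :=
  Matrix.of fun u v => (if u = v then degG G u else 0) - adjW G u v

/-- The normalized Laplacian `𝓛 = D^{-1/2} L D^{-1/2}` of a simple graph. -/
def nlapG {n : ℕ} (G : SimpleGraph (Fin n)) : Matrix (Fin n) (Fin n) ℝ :=
  Matrix.of fun u v => lapG G u v / (Real.sqrt (degG G u) * Real.sqrt (degG G v))

/-!
In a tree, a neighbour of `u` is closer to a vertex `v ≠ u` exactly when it is the next vertex of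
the geodesic from `u` to `v`, and otherwise one step farther. This gives `L D = (2 - deg) 𝟙ᵀ - 2 I`
for the Laplacian `L` and the distance matrix `D`. With `P = I - J / n` the projection onto `𝟙ᗮ`,
the matrix `N = -½ P D P` therefore inverts `L` on `𝟙ᗮ` and kills its kernel `ℝ 𝟙`, so the sum of
the reciprocals of the nonzero eigenvalues of `L` is `tr N = ∑_{u,v} d(u,v) / 2n`.

As `d(u,v) ≥ 2` for distinct non-adjacent `u, v` and a tree has `n - 1` edges,
`∑_{u,v} d(u,v) ≥ 2n(n - 1) - 2(n - 1) = 2(n - 1)²`, with equality iff the diameter is at most 2.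
Such a tree is a star: the neighbour of a leaf is adjacent to every other vertex.
-/

open Matrix

namespace Matrix

variable {V : Type*} [Fintype V] [DecidableEq V]

variable (V) in
def centeringMatrix : Matrix V V ℝ := 1 - (Fintype.card V : ℝ)⁻¹ • of fun _ _ => 1

lemma centeringMatrix_transpose : (centeringMatrix V)ᵀ = centeringMatrix V := by
  simp [centeringMatrix, transpose_sub, ← ext_iff]

lemma mul_centeringMatrix_apply (A : Matrix V V ℝ) (u v : V) :
    (A * centeringMatrix V) u v = A u v - (∑ w, A u w) / Fintype.card V := by
  rw [centeringMatrix, Matrix.mul_sub, Matrix.mul_one, Matrix.mul_smul, sub_apply, smul_apply,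
    mul_apply]
  simp [div_eq_mul_inv, mul_comm]

lemma centeringMatrix_mulVec (x : V → ℝ) :
    centeringMatrix V *ᵥ x = fun u => x u - (∑ w, x w) / Fintype.card V := by
  rw [centeringMatrix, sub_mulVec, one_mulVec, smul_mulVec]
  ext u
  simp [mulVec, dotProduct, div_eq_mul_inv, mul_comm]

lemma centeringMatrix_mulVec_of_sum_eq_zero {x : V → ℝ} (hx : ∑ w, x w = 0) :
    centeringMatrix V *ᵥ x = x := by
  simp [centeringMatrix_mulVec, hx]

lemma mul_centeringMatrix_of_mulVec_one_eq_zero {A : Matrix V V ℝ} (hA : A *ᵥ 1 = 0) :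
    A * centeringMatrix V = A := by
  ext u v
  have hrow : ∑ w, A u w = 0 := by simpa [mulVec, dotProduct] using congrFun hA u
  simp [mul_centeringMatrix_apply, hrow]

section Nonempty

variable [Nonempty V]

lemma centeringMatrix_mulVec_one : centeringMatrix V *ᵥ 1 = 0 := by
  ext u
  simp [centeringMatrix_mulVec]

lemma centeringMatrix_mul_self : centeringMatrix V * centeringMatrix V = centeringMatrix V :=
  mul_centeringMatrix_of_mulVec_one_eq_zero centeringMatrix_mulVec_one

lemma of_mul_centeringMatrix (r : V → ℝ) :
    of (fun u (_ : V) => r u) * centeringMatrix V = 0 := by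
  ext u v
  simp [mul_centeringMatrix_apply]

end Nonempty

lemma trace_mul_centeringMatrix (A : Matrix V V ℝ) :
    (A * centeringMatrix V).trace = A.trace - (∑ u, ∑ v, A u v) / Fintype.card V := by
  simp [trace, mul_centeringMatrix_apply, Finset.sum_sub_distrib, Finset.sum_div]

lemma IsHermitian.trace_eq_sum_of_mulVec_eigenvectorBasis {𝕜 : Type*} [RCLike 𝕜]
    {A N : Matrix V V 𝕜} (hA : A.IsHermitian) (f : V → 𝕜)
    (hN : ∀ j, N *ᵥ ⇑(hA.eigenvectorBasis j) = f j • ⇑(hA.eigenvectorBasis j)) :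
    N.trace = ∑ j, f j := by
  have hdiag (j : V) :
      (star (hA.eigenvectorUnitary : Matrix V V 𝕜) * N * hA.eigenvectorUnitary) j j = f j := by
    have := congrFun (congrArg (star ↑hA.eigenvectorUnitary *ᵥ ·) (hN j)) j
    simp only [mulVec_smul, hA.star_eigenvectorUnitary_mulVec, mulVec_mulVec] at this
    rw [← hA.eigenvectorUnitary_mulVec, mulVec_mulVec, mulVec_single_one] at this
    simpa [Matrix.mul_assoc] using this
  calc N.trace
        = (star (hA.eigenvectorUnitary : Matrix V V 𝕜) * N * hA.eigenvectorUnitary).trace := by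
        rw [trace_mul_cycle, mem_unitaryGroup_iff.mp hA.eigenvectorUnitary.2, Matrix.one_mul]
    _ = ∑ j, f j := Finset.sum_congr rfl fun j _ => hdiag j

end Matrix

namespace SimpleGraph

variable {V : Type*} {G : SimpleGraph V}

lemma IsTree.eq_snd_of_adj_of_dist_add_one_eq (hG : G.IsTree) {u v w : V} {p : G.Walk u v}
    (hp : p.length = G.dist u v) (hw : G.Adj u w) (hwv : G.dist w v + 1 = G.dist u v) :
    w = p.snd := by
  obtain ⟨q, hq⟩ := hG.connected.exists_walk_length_eq_dist w v
  have hqp : (q.cons hw).length = G.dist u v := by rw [Walk.length_cons, hq, hwv]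
  have := (hG.isAcyclic.subsingleton_path u v).elim
    ⟨_, (q.cons hw).isPath_of_length_eq_dist hqp⟩ ⟨p, p.isPath_of_length_eq_dist hp⟩
  simpa using congrArg (fun r : G.Path u v => r.1.snd) this

lemma Walk.dist_snd_add_one {u v : V} (p : G.Walk u v) (hp : p.length = G.dist u v)
    (huv : u ≠ v) : G.dist p.snd v + 1 = G.dist u v := by
  have hnil : ¬ p.Nil := fun h => huv h.eq
  have hle : G.dist p.snd v ≤ p.tail.length := dist_le _
  have hge : G.dist u v ≤ G.dist p.snd v + 1 := by
    obtain ⟨q, hq⟩ := (p.tail.reachable).exists_walk_length_eq_dist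
    simpa [hq] using dist_le (q.cons (p.adj_snd hnil))
  have := p.length_tail_add_one hnil
  omega

lemma IsTree.dist_eq_add_one_of_adj_of_ne_snd (hG : G.IsTree) {u v w : V} {p : G.Walk u v}
    (hp : p.length = G.dist u v) (hw : G.Adj u w) (hne : w ≠ p.snd) :
    G.dist w v = G.dist u v + 1 := by
  rcases hG.dist_eq_dist_add_one_of_adj v hw with h | h <;> simp only [G.dist_comm (u := v)] at h
  · exact absurd (hG.eq_snd_of_adj_of_dist_add_one_eq hp hw h.symm) hne
  · exact h

lemma IsUniversal.dist_le_one {m : V} (hm : G.IsUniversal m) (v : V) : G.dist m v ≤ 1 := by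
  by_cases h : m = v
  · simp [h]
  · exact (dist_eq_one_iff_adj.2 (hm h)).le

lemma IsUniversal.dist_le_two {m : V} (hm : G.IsUniversal m) (u v : V) : G.dist u v ≤ 2 := by
  calc G.dist u v ≤ G.dist m u + G.dist m v := by
        rw [dist_comm (u := m) (v := u)]; exact (Connected.of_isUniversal hm).dist_triangle
    _ ≤ 2 := by linarith [hm.dist_le_one u, hm.dist_le_one v]

lemma IsAcyclic.eq_starGraph_of_isUniversal (hG : G.IsAcyclic) {m : V} (hm : G.IsUniversal m) :
    G = starGraph m := by
  ext x y
  rw [starGraph_adj]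
  refine ⟨fun hxy => ⟨hxy.ne, ?_⟩, ?_⟩
  · by_contra! hxy'
    classical
    exact hG.cliqueFree le_rfl {m, x, y}
      (is3Clique_triple_iff.2 ⟨hm (Ne.symm hxy'.1), hm (Ne.symm hxy'.2), hxy⟩)
  · rintro ⟨hne, rfl | rfl⟩
    exacts [hm hne, (hm hne.symm).symm]

def starGraphIso [DecidableEq V] (r r' : V) : starGraph r ≃g starGraph r' where
  toEquiv := Equiv.swap r r'
  map_rel_iff' := by simp [Equiv.swap_apply_eq_iff]

lemma Iso.isUniversal_symm {W : Type*} {G' : SimpleGraph W} (f : G ≃g G') {m : W}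
    (hm : G'.IsUniversal m) : G.IsUniversal (f.symm m) := fun w hw => by
  rw [← f.map_adj_iff, RelIso.apply_symm_apply]
  exact hm fun h => hw (by rw [h, RelIso.symm_apply_apply])

lemma IsTree.exists_isUniversal_of_forall_dist_le_two [Fintype V] [Nontrivial V]
    [DecidableRel G.Adj] (hG : G.IsTree) (h : ∀ u v, G.dist u v ≤ 2) :
    ∃ m, G.IsUniversal m := by
  obtain ⟨u, hu⟩ := hG.exists_vert_degree_one_of_nontrivial
  obtain ⟨m, hum, hleaf⟩ := degree_eq_one_iff_existsUnique_adj.1 hu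
  refine ⟨m, fun z hmz => ?_⟩
  rcases eq_or_ne u z with rfl | huz
  · exact hum.symm
  have hnadj : ¬ G.Adj u z := fun huz' => hmz (hleaf z huz').symm
  have hdist : G.edist u z = 2 := by
    rw [← (hG.connected u z).coe_dist_eq_edist,
      le_antisymm (h u z) (hG.connected.one_lt_dist_of_ne_of_not_adj huz hnadj)]
    rfl
  obtain ⟨w, huw, hzw⟩ := (edist_eq_two_iff.1 hdist).2.2
  rw [hleaf w huw] at hzw
  exact hzw.symm

lemma IsTree.sum_sum_dist_add_ite_adj [Fintype V] [DecidableRel G.Adj] (hG : G.IsTree) :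
    ∑ u, ∑ v, (G.dist u v + if G.Adj u v then 1 else 0) =
      ∑ u, ∑ v, G.dist u v + 2 * (Fintype.card V - 1) := by
  simp only [Finset.sum_add_distrib, ← degree_eq_sum_if_adj, Nat.cast_id,
    sum_degrees_eq_twice_card_edges, ← hG.card_edgeFinset, Nat.add_sub_cancel]

def distMatrix (G : SimpleGraph V) : Matrix V V ℝ := of fun u v => (G.dist u v : ℝ)

lemma distMatrix_transpose : G.distMatrixᵀ = G.distMatrix := by
  ext u v
  simp [distMatrix, dist_comm]

section

variable [DecidableEq V] [DecidableRel G.Adj]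

lemma Connected.ite_le_dist_add_ite_adj (hG : G.Connected) (u v : V) :
    (if u = v then 0 else 2) ≤ G.dist u v + if G.Adj u v then 1 else 0 := by
  by_cases huv : u = v
  · simp [huv]
  by_cases hadj : G.Adj u v
  · simp [huv, hadj, dist_eq_one_iff_adj.2 hadj]
  · have := hG.one_lt_dist_of_ne_of_not_adj huv hadj
    simp only [huv, hadj, if_false, add_zero]
    omega

lemma Connected.ite_eq_dist_add_ite_adj_iff (hG : G.Connected) (u v : V) :
    (if u = v then 0 else 2) = G.dist u v + (if G.Adj u v then 1 else 0) ↔ G.dist u v ≤ 2 := by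
  by_cases huv : u = v
  · simp [huv]
  by_cases hadj : G.Adj u v
  · simp [huv, hadj, dist_eq_one_iff_adj.2 hadj]
  · have := hG.one_lt_dist_of_ne_of_not_adj huv hadj
    simp only [huv, hadj, if_false, add_zero]
    omega

end

variable [Fintype V] [DecidableEq V]

variable (G) in
def centeredDistMatrix : Matrix V V ℝ :=
  (-(1 / 2) : ℝ) • (centeringMatrix V * G.distMatrix * centeringMatrix V)

lemma centeredDistMatrix_transpose : (G.centeredDistMatrix)ᵀ = G.centeredDistMatrix := by
  rw [centeredDistMatrix, transpose_smul, transpose_mul, transpose_mul, centeringMatrix_transpose,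
    distMatrix_transpose, Matrix.mul_assoc]

lemma centeredDistMatrix_mulVec_one [Nonempty V] : G.centeredDistMatrix *ᵥ 1 = 0 := by
  rw [centeredDistMatrix, smul_mulVec, ← mulVec_mulVec, centeringMatrix_mulVec_one, mulVec_zero,
    smul_zero]

lemma trace_centeredDistMatrix [Nonempty V] :
    G.centeredDistMatrix.trace = (∑ u, ∑ v, (G.dist u v : ℝ)) / (2 * Fintype.card V) := by
  have htrace : G.distMatrix.trace = 0 := by simp [trace, distMatrix]
  rw [centeredDistMatrix, trace_smul, trace_mul_cycle, centeringMatrix_mul_self,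
    trace_mul_comm, trace_mul_centeringMatrix, htrace]
  simp only [distMatrix, of_apply, smul_eq_mul]
  ring

variable (V) in
lemma sum_sum_ite_eq_zero_else_two :
    ∑ u : V, ∑ v : V, (if u = v then 0 else 2) =
      2 * (Fintype.card V - 1) ^ 2 + 2 * (Fintype.card V - 1) := by
  have hrow (u : V) : ∑ v : V, (if u = v then 0 else 2) = 2 * (Fintype.card V - 1) := by
    rw [Finset.sum_ite, Finset.sum_const_zero, zero_add, Finset.sum_const, smul_eq_mul,
      Finset.filter_ne, Finset.card_erase_of_mem (Finset.mem_univ u), Finset.card_univ, mul_comm]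
  rw [Finset.sum_congr rfl fun u _ => hrow u, Finset.sum_const, Finset.card_univ, smul_eq_mul]
  rcases Nat.eq_zero_or_pos (Fintype.card V) with h | h
  · simp [h]
  · obtain ⟨k, hk⟩ : ∃ k, Fintype.card V = k + 1 := ⟨_, (Nat.succ_pred_eq_of_pos h).symm⟩
    rw [hk, Nat.add_sub_cancel]
    ring

variable [DecidableRel G.Adj]

lemma IsTree.two_mul_sq_le_sum_dist (hG : G.IsTree) :
    2 * (Fintype.card V - 1) ^ 2 ≤ ∑ u, ∑ v, G.dist u v := by
  have := Finset.sum_le_sum fun u (_ : u ∈ Finset.univ) =>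
    Finset.sum_le_sum fun v (_ : v ∈ Finset.univ) => hG.connected.ite_le_dist_add_ite_adj u v
  rw [sum_sum_ite_eq_zero_else_two, hG.sum_sum_dist_add_ite_adj] at this
  omega

lemma IsTree.sum_dist_eq_iff (hG : G.IsTree) :
    ∑ u, ∑ v, G.dist u v = 2 * (Fintype.card V - 1) ^ 2 ↔ ∀ u v, G.dist u v ≤ 2 := by
  have hle (u v : V) := hG.connected.ite_le_dist_add_ite_adj u v
  rw [← add_left_inj (2 * (Fintype.card V - 1)), ← hG.sum_sum_dist_add_ite_adj,
    ← sum_sum_ite_eq_zero_else_two, eq_comm,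
    Finset.sum_eq_sum_iff_of_le fun u _ => Finset.sum_le_sum fun v _ => hle u v]
  simp only [Finset.mem_univ, forall_const, Finset.sum_eq_sum_iff_of_le fun v _ => hle _ v,
    hG.connected.ite_eq_dist_add_ite_adj_iff]

lemma IsTree.sum_dist_neighborFinset_add_two (hG : G.IsTree) {u v : V} (huv : u ≠ v) :
    ∑ w ∈ G.neighborFinset u, G.dist w v + 2 = G.degree u * (G.dist u v + 1) := by
  obtain ⟨p, hp⟩ := hG.connected.exists_walk_length_eq_dist u v
  have hsnd : p.snd ∈ G.neighborFinset u := by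
    simpa using p.adj_snd fun h => huv h.eq
  have hfar : ∀ w ∈ (G.neighborFinset u).erase p.snd, G.dist w v = G.dist u v + 1 :=
    fun w hw => hG.dist_eq_add_one_of_adj_of_ne_snd hp
      ((mem_neighborFinset ..).1 (Finset.mem_of_mem_erase hw)) (Finset.ne_of_mem_erase hw)
  rw [← Finset.add_sum_erase _ _ hsnd, Finset.sum_congr rfl hfar, Finset.sum_const,
    Finset.card_erase_of_mem hsnd, card_neighborFinset_eq_degree, smul_eq_mul]
  have hclose := p.dist_snd_add_one hp huv
  obtain ⟨k, hk⟩ : ∃ k, G.degree u = k + 1 :=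
    ⟨G.degree u - 1, by have := Finset.card_pos.2 ⟨_, hsnd⟩; simp at this; omega⟩
  rw [hk, Nat.add_sub_cancel, ← hclose]
  ring

lemma IsTree.lapMatrix_mul_distMatrix (hG : G.IsTree) :
    G.lapMatrix ℝ * G.distMatrix = of (fun u _ => 2 - (G.degree u : ℝ)) - (2 : ℝ) • 1 := by
  ext u v
  change (G.lapMatrix ℝ *ᵥ fun w => (G.dist w v : ℝ)) u = _
  rw [lapMatrix_mulVec_apply]
  by_cases huv : u = v
  · subst huv
    have hnbr : ∀ w ∈ G.neighborFinset u, (G.dist w u : ℝ) = 1 := fun w hw => by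
      rw [dist_eq_one_iff_adj.2 ((mem_neighborFinset ..).1 hw).symm, Nat.cast_one]
    simp [Finset.sum_congr rfl hnbr]
  · have := hG.sum_dist_neighborFinset_add_two huv
    have hsum : ∑ w ∈ G.neighborFinset u, (G.dist w v : ℝ) =
        G.degree u * (G.dist u v + 1) - 2 := by
      rw [eq_sub_iff_add_eq, ← Nat.cast_sum]; exact_mod_cast this
    simp [hsum, huv]
    ring

lemma one_dotProduct_lapMatrix_mulVec (x : V → ℝ) : 1 ⬝ᵥ (G.lapMatrix ℝ *ᵥ x) = 0 := by
  rw [dotProduct_mulVec, ← mulVec_transpose, (G.isSymm_lapMatrix ℝ).eq]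
  exact (congrArg (· ⬝ᵥ x) G.lapMatrix_mulVec_const_eq_zero).trans (zero_dotProduct x)

lemma Connected.sum_inv_eigenvalues_lapMatrix_eq_trace (hG : G.Connected) {N : Matrix V V ℝ}
    (hN : N *ᵥ 1 = 0) (hNL : N * G.lapMatrix ℝ = centeringMatrix V) :
    ∑ j, ((G.isHermitian_lapMatrix ℝ).eigenvalues j)⁻¹ = N.trace := by
  set hL := G.isHermitian_lapMatrix ℝ
  refine (hL.trace_eq_sum_of_mulVec_eigenvectorBasis _ fun j => ?_).symm
  set x := ⇑(hL.eigenvectorBasis j)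
  have hLx : G.lapMatrix ℝ *ᵥ x = hL.eigenvalues j • x := hL.mulVec_eigenvectorBasis j
  by_cases hzero : hL.eigenvalues j = 0
  · -- the kernel eigenvector is constant, so `N` kills it, matching `0⁻¹ = 0`
    rw [hzero, zero_smul, lapMatrix_mulVec_eq_zero_iff_forall_reachable] at hLx
    obtain ⟨v⟩ := hG.nonempty
    have hconst : x = x v • 1 := funext fun u => by simpa using hLx u v (hG u v)
    rw [hzero, _root_.inv_zero, zero_smul, hconst, mulVec_smul, hN, smul_zero]
  · have hsum : ∑ u, x u = 0 := by
      have := one_dotProduct_lapMatrix_mulVec (G := G) x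
      rw [hLx, dotProduct_smul, smul_eq_mul, mul_eq_zero] at this
      simpa [dotProduct] using this.resolve_left hzero
    have hNLx := congrArg (N *ᵥ ·) hLx
    simp only [mulVec_mulVec, hNL, centeringMatrix_mulVec_of_sum_eq_zero hsum, mulVec_smul]
      at hNLx
    exact (eq_inv_smul_iff₀ hzero).2 hNLx.symm

lemma IsTree.lapMatrix_mul_centeredDistMatrix (hG : G.IsTree) :
    G.lapMatrix ℝ * G.centeredDistMatrix = centeringMatrix V := by
  have := hG.connected.nonempty
  rw [centeredDistMatrix, Matrix.mul_smul, ← Matrix.mul_assoc, ← Matrix.mul_assoc,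
    mul_centeringMatrix_of_mulVec_one_eq_zero G.lapMatrix_mulVec_const_eq_zero,
    hG.lapMatrix_mul_distMatrix, Matrix.sub_mul, of_mul_centeringMatrix, smul_mul,
    Matrix.one_mul, zero_sub, smul_neg, neg_smul, neg_neg, smul_smul]
  norm_num

lemma IsTree.centeredDistMatrix_mul_lapMatrix (hG : G.IsTree) :
    G.centeredDistMatrix * G.lapMatrix ℝ = centeringMatrix V := by
  simpa [transpose_mul, centeredDistMatrix_transpose, (G.isSymm_lapMatrix ℝ).eq,
    centeringMatrix_transpose] using congrArg transpose hG.lapMatrix_mul_centeredDistMatrix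

lemma IsTree.sum_inv_eigenvalues_lapMatrix (hG : G.IsTree) :
    ∑ j, ((G.isHermitian_lapMatrix ℝ).eigenvalues j)⁻¹ =
      (∑ u, ∑ v, (G.dist u v : ℝ)) / (2 * Fintype.card V) := by
  have := hG.connected.nonempty
  rw [hG.connected.sum_inv_eigenvalues_lapMatrix_eq_trace centeredDistMatrix_mulVec_one
    hG.centeredDistMatrix_mul_lapMatrix, trace_centeredDistMatrix]

end SimpleGraph

lemma lapG_eq_lapMatrix {n : ℕ} (G : SimpleGraph (Fin n)) : lapG G = G.lapMatrix ℝ := by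
  ext u v
  simp [lapG, degG, adjW, SimpleGraph.lapMatrix, SimpleGraph.degMatrix, Matrix.diagonal_apply,
    SimpleGraph.degree_eq_sum_if_adj (R := ℝ)]

lemma sumInvEig_lapG_of_isTree {n : ℕ} {T : SimpleGraph (Fin n)} (hT : T.IsTree) :
    sumInvEig (lapG T) = ((∑ u, ∑ v, T.dist u v : ℕ) : ℝ) / (2 * n) := by
  rw [lapG_eq_lapMatrix, sumInvEig, dif_pos (T.isHermitian_lapMatrix ℝ),
    hT.sum_inv_eigenvalues_lapMatrix, Fintype.card_fin]
  push_cast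
  rfl

lemma starGraph_eq_starGraph_zero {n : ℕ} [NeZero n] : starGraph n = SimpleGraph.starGraph 0 := by
  ext u v
  rw [SimpleGraph.starGraph_adj, starGraph, SimpleGraph.fromRel_adj, Fin.ext_iff, Fin.ext_iff,
    Fin.val_zero]

lemma SimpleGraph.IsAcyclic.nonempty_iso_starGraph_iff {n : ℕ} [NeZero n]
    {G : SimpleGraph (Fin n)} (hG : G.IsAcyclic) :
    Nonempty (G ≃g _root_.starGraph n) ↔ ∃ m, G.IsUniversal m := by
  rw [starGraph_eq_starGraph_zero]
  refine ⟨fun ⟨f⟩ => ⟨_, f.isUniversal_symm isUniversal_starGraph_self⟩, fun ⟨m, hm⟩ => ?_⟩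
  exact hG.eq_starGraph_of_isUniversal hm ▸ ⟨starGraphIso m 0⟩

theorem stmt1 {n : ℕ} (hn : 2 ≤ n) (T : SimpleGraph (Fin n)) (hT : T.IsTree) :
    sumInvEig (lapG (starGraph n)) ≤ sumInvEig (lapG T) ∧
    (sumInvEig (lapG T) = sumInvEig (lapG (starGraph n)) ↔
      Nonempty (T ≃g starGraph n)) := by
  have : NeZero n := ⟨by omega⟩
  have : Nontrivial (Fin n) := Fin.nontrivial_iff_two_le.2 hn
  have hstar : (starGraph n).IsTree := by
    rw [starGraph_eq_starGraph_zero]; exact SimpleGraph.isTree_starGraph 0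
  have hstarSum : ∑ u, ∑ v, (starGraph n).dist u v = 2 * (n - 1) ^ 2 := by
    simpa using hstar.sum_dist_eq_iff.2 (by
      rw [starGraph_eq_starGraph_zero]; exact SimpleGraph.isUniversal_starGraph_self.dist_le_two)
  have hTsum := hT.sum_dist_eq_iff
  rw [Fintype.card_fin] at hTsum
  have h2n : (0 : ℝ) < 2 * n := by positivity
  rw [sumInvEig_lapG_of_isTree hT, sumInvEig_lapG_of_isTree hstar, hstarSum]
  refine ⟨div_le_div_of_nonneg_right ?_ h2n.le, ?_⟩
  · exact_mod_cast (Fintype.card_fin n ▸ hT.two_mul_sq_le_sum_dist)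
  rw [div_left_inj' h2n.ne', Nat.cast_inj, hTsum, hT.isAcyclic.nonempty_iso_starGraph_iff]
  exact ⟨hT.exists_isUniversal_of_forall_dist_le_two, fun ⟨m, hm⟩ => hm.dist_le_two⟩
end
end

section
/- Let T be a weighted tree with positive edge weights that edge-transfers to the weighted tree T' with respect to size. Then the sum of the reciprocals of the nonzero eigenvalues of the combinatorial Laplacian of T is strictly greater than the corresponding sum for T'. (Since T and T' have the same number of vertices and the same volume, this expresses α(T) > α(T'), where α is the average hitting time.) -/
open scoped Classical

noncomputable section

/-!
Let `P = J/n` be the orthogonal projection onto the constant vectors. If a symmetric matrix `L`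
has exactly the constants as kernel (as the Laplacian of a connected weighted graph does), then
`L + P` is invertible and `∑ 1/λᵢ = tr (L + P)⁻¹ - 1`, the sum running over the nonzero
eigenvalues of `L`.

Write `H = T ∖ {e₁, e₂}` and `χᵢ` for the indicator of its component `Tᵢ ∋ vᵢ`. The transfer
changes the Laplacian by the rank-two update `L' = L + ω(e₂) (b bᵀ - a aᵀ)` with
`a = 𝟙_{v₂} - 𝟙_{v₃}` and `b = 𝟙_{v₁} - 𝟙_{v₃}`, so by the resolvent identity
`tr (L + P)⁻¹ - tr (L' + P)⁻¹` only involves `(L + P)⁻¹` and `(L' + P)⁻¹` applied to `a` and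
`b`. All four are explicit combinations of the `χᵢ`, because on vectors constant on the
components of `H` both Laplacians only see the two edges through `v₂`, resp. `v₁`; for instance
`χ₃` solves both `L χ₃ = -ω(e₂) a` and `L' χ₃ = -ω(e₂) b`. The outcome is
`∑ 1/λ(T) - ∑ 1/λ(T') = |T₃| (|T₁| - |T₂|) / (n ω(e₁))`, which is positive.
-/

open Matrix

section ConstProj

variable {ι : Type*} [Fintype ι]

def constProj (ι : Type*) [Fintype ι] : Matrix ι ι ℝ := of fun _ _ => (Fintype.card ι : ℝ)⁻¹

def HasConstKernel (L : Matrix ι ι ℝ) : Prop := ∀ x : ι → ℝ, L *ᵥ x = 0 ↔ ∀ i j, x i = x j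

lemma constProj_mulVec (x : ι → ℝ) :
    constProj ι *ᵥ x = fun _ => (∑ i, x i) / Fintype.card ι := by
  ext i
  simp [constProj, mulVec, dotProduct, Finset.mul_sum, div_eq_inv_mul]

lemma dotProduct_constProj_mulVec (x y : ι → ℝ) :
    x ⬝ᵥ (constProj ι *ᵥ y) = (∑ i, x i) * (∑ i, y i) / Fintype.card ι := by
  simp only [constProj_mulVec, dotProduct, Finset.sum_mul, Finset.sum_div, mul_div_assoc]

lemma constProj_transpose : (constProj ι)ᵀ = constProj ι := rfl

lemma constProj_mul_self : constProj ι * constProj ι = constProj ι := by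
  ext i j
  have : (Fintype.card ι : ℝ) ≠ 0 := Nat.cast_ne_zero.mpr (Fintype.card_pos_iff.mpr ⟨i⟩).ne'
  simp [constProj, mul_apply]
  field_simp

namespace HasConstKernel

variable {L : Matrix ι ι ℝ}

lemma mulVec_const (hK : HasConstKernel L) (c : ℝ) : L *ᵥ (fun _ => c) = 0 :=
  (hK _).mpr fun _ _ => rfl

lemma mul_constProj (hK : HasConstKernel L) : L * constProj ι = 0 := by
  ext i j
  simpa [constProj, mul_apply, mulVec, dotProduct, Finset.sum_mul] using
    congrFun (hK.mulVec_const (Fintype.card ι : ℝ)⁻¹) i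

variable [DecidableEq ι]

lemma add_constProj_mul_one_sub (hK : HasConstKernel L) :
    (L + constProj ι) * (1 - constProj ι) = L := by
  rw [add_mul, mul_sub, mul_sub, hK.mul_constProj, constProj_mul_self]
  simp

lemma inv_add_constProj_mulVec_mulVec (hK : HasConstKernel L)
    (hdet : IsUnit (L + constProj ι).det) (x : ι → ℝ) :
    (L + constProj ι)⁻¹ *ᵥ (L *ᵥ x) = (1 - constProj ι) *ᵥ x := by
  have hinv : (L + constProj ι)⁻¹ * L = 1 - constProj ι :=
    calc (L + constProj ι)⁻¹ * L
        = (L + constProj ι)⁻¹ * ((L + constProj ι) * (1 - constProj ι)) := by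
          rw [hK.add_constProj_mul_one_sub]
      _ = 1 - constProj ι := by rw [← Matrix.mul_assoc, nonsing_inv_mul _ hdet, Matrix.one_mul]
  rw [mulVec_mulVec, hinv]

end HasConstKernel

end ConstProj

lemma trace_inv_sub_trace_inv_of_sub_eq {ι : Type*} [Fintype ι] [DecidableEq ι]
    {M M' : Matrix ι ι ℝ} (hM : IsUnit M.det) (hM' : IsUnit M'.det) (hM'T : M'ᵀ = M')
    {w : ℝ} {a b : ι → ℝ} (h : M' - M = w • (vecMulVec b b - vecMulVec a a)) :
    M⁻¹.trace - M'⁻¹.trace =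
      w * ((M'⁻¹ *ᵥ b) ⬝ᵥ (M⁻¹ *ᵥ b) - (M'⁻¹ *ᵥ a) ⬝ᵥ (M⁻¹ *ᵥ a)) := by
  have hresolvent : M⁻¹ - M'⁻¹ = M⁻¹ * (M' - M) * M'⁻¹ := by
    rw [Matrix.mul_sub, Matrix.sub_mul, Matrix.mul_assoc, mul_nonsing_inv _ hM', Matrix.mul_one,
      nonsing_inv_mul _ hM, Matrix.one_mul]
  have htrace (r : ι → ℝ) :
      (M⁻¹ * vecMulVec r r * M'⁻¹).trace = (M'⁻¹ *ᵥ r) ⬝ᵥ (M⁻¹ *ᵥ r) := by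
    rw [mul_vecMulVec, vecMulVec_mul, trace_vecMulVec, dotProduct_comm]
    conv_lhs => rw [← hM'T, ← transpose_nonsing_inv, vecMul_transpose]
  rw [← trace_sub, hresolvent, h, Matrix.mul_smul, Matrix.smul_mul, trace_smul, Matrix.mul_sub,
    Matrix.sub_mul, trace_sub, htrace, htrace, smul_eq_mul]

lemma isUnit_det_and_trace_inv_of_eq_conj_diagonal {ι : Type*} [Fintype ι] [DecidableEq ι]
    {U A : Matrix ι ι ℝ} (hU : U ∈ unitaryGroup ι ℝ) {d : ι → ℝ} (hd : ∀ i, d i ≠ 0)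
    (hA : A = U * diagonal d * star U) : IsUnit A.det ∧ A⁻¹.trace = ∑ i, (d i)⁻¹ := by
  have hUU : star U * U = 1 := mem_unitaryGroup_iff'.mp hU
  have hUU' : U * star U = 1 := mem_unitaryGroup_iff.mp hU
  have hinv : A⁻¹ = U * diagonal (fun i => (d i)⁻¹) * star U := by
    apply inv_eq_right_inv
    calc A * (U * diagonal (fun i => (d i)⁻¹) * star U)
        = U * (diagonal d * (star U * U) * diagonal fun i => (d i)⁻¹) * star U := by
          simp only [hA, Matrix.mul_assoc]
      _ = 1 := by
          rw [hUU, Matrix.mul_one, diagonal_mul_diagonal]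
          simp [hd, hUU']
  refine ⟨?_, ?_⟩
  · rw [hA, det_mul_right_comm, hUU', Matrix.one_mul, det_diagonal, isUnit_iff_ne_zero]
    exact Finset.prod_ne_zero_iff.mpr fun i _ => hd i
  · rw [hinv, trace_mul_cycle, hUU, Matrix.one_mul, trace_diagonal]

section Spectral

variable {ι : Type*} [Fintype ι] [DecidableEq ι] {L : Matrix ι ι ℝ}

lemma Matrix.IsHermitian.eq_conj_diagonal_of_mulVec_eigenvectorBasis (hL : L.IsHermitian)
    {A : Matrix ι ι ℝ} {d : ι → ℝ}
    (h : ∀ j, A *ᵥ ⇑(hL.eigenvectorBasis j) = d j • ⇑(hL.eigenvectorBasis j)) :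
    A = (hL.eigenvectorUnitary : Matrix ι ι ℝ) * diagonal d *
      star (hL.eigenvectorUnitary : Matrix ι ι ℝ) := by
  set U : Matrix ι ι ℝ := ↑hL.eigenvectorUnitary
  have hAU : A * U = U * diagonal d := by
    refine ext_of_mulVec_single fun j => ?_
    rw [← mulVec_mulVec, ← mulVec_mulVec, IsHermitian.eigenvectorUnitary_mulVec, h,
      diagonal_mulVec_single, ← smul_eq_mul, Pi.single_smul', mulVec_smul,
      IsHermitian.eigenvectorUnitary_mulVec]
  calc A = A * U * star U := by
        rw [Matrix.mul_assoc, mem_unitaryGroup_iff.mp hL.eigenvectorUnitary.2, Matrix.mul_one]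
    _ = U * diagonal d * star U := by rw [hAU]

namespace HasConstKernel

lemma add_constProj_mulVec_eigenvectorBasis (hL : L.IsHermitian) (hK : HasConstKernel L) (j : ι) :
    (L + constProj ι) *ᵥ ⇑(hL.eigenvectorBasis j) =
      (if hL.eigenvalues j = 0 then 1 else hL.eigenvalues j) • ⇑(hL.eigenvectorBasis j) := by
  set v := ⇑(hL.eigenvectorBasis j)
  have hLv : L *ᵥ v = hL.eigenvalues j • v := hL.mulVec_eigenvectorBasis j
  rw [add_mulVec, hLv, constProj_mulVec]
  split_ifs with h0
  · have hconst := (hK v).mp (by rw [hLv, h0, zero_smul])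
    have hcard : (Fintype.card ι : ℝ) ≠ 0 := Nat.cast_ne_zero.mpr (Fintype.card_pos_iff.mpr ⟨j⟩).ne'
    ext i
    simp [h0, hconst _ i]
    field_simp
  · -- `1ᵀ L = (L 1)ᵀ = 0`, so an eigenvector with nonzero eigenvalue is orthogonal to `1`
    have hsum : ∑ i, v i = 0 := by
      have h1L : (fun _ => (1 : ℝ)) ᵥ* L = 0 := by
        rw [← hL.eq, conjTranspose_eq_transpose_of_trivial, vecMul_transpose, hK.mulVec_const]
      have := congrArg ((fun _ => (1 : ℝ)) ⬝ᵥ ·) hLv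
      simp only [dotProduct_mulVec, h1L, zero_dotProduct, dotProduct_smul, smul_eq_mul] at this
      simpa [dotProduct, h0] using this.symm
    ext i
    simp [hsum]

lemma card_eigenvalues_eq_zero [Nonempty ι] (hL : L.IsHermitian) (hK : HasConstKernel L) :
    (Finset.univ.filter fun i => hL.eigenvalues i = 0).card = 1 := by
  obtain ⟨i₀⟩ := ‹Nonempty ι›
  have hker : LinearMap.ker L.mulVecLin = ℝ ∙ (fun _ => (1 : ℝ)) := by
    ext x
    rw [LinearMap.mem_ker, mulVecLin_apply, hK, Submodule.mem_span_singleton]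
    constructor
    · intro hx
      exact ⟨x i₀, funext fun i => by simp [hx i₀ i]⟩
    · rintro ⟨c, rfl⟩ i j
      rfl
  have hrank : L.rank + 1 = Fintype.card ι := by
    have := LinearMap.finrank_range_add_finrank_ker L.mulVecLin
    rwa [hker, finrank_span_singleton (fun h => by simpa using congrFun h i₀),
      Module.finrank_fintype_fun_eq_card] at this
  have hsplit := Finset.card_filter_add_card_filter_not
    (s := Finset.univ) (fun i => hL.eigenvalues i = 0)
  rw [hL.rank_eq_card_non_zero_eigs, Fintype.card_subtype] at hrank
  simp only [Finset.card_univ, ne_eq] at hsplit hrank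
  omega

end HasConstKernel

end Spectral

section SumInvEig

variable {n : ℕ} {L L' : Matrix (Fin n) (Fin n) ℝ}

theorem HasConstKernel.sumInvEig_eq (hn : 0 < n) (hL : L.IsHermitian) (hK : HasConstKernel L) :
    IsUnit (L + constProj (Fin n)).det ∧ sumInvEig L = (L + constProj (Fin n))⁻¹.trace - 1 := by
  have : Nonempty (Fin n) := ⟨⟨0, hn⟩⟩
  set d : Fin n → ℝ := fun j => if hL.eigenvalues j = 0 then 1 else hL.eigenvalues j
  have hd (j : Fin n) : d j ≠ 0 := by by_cases h : hL.eigenvalues j = 0 <;> simp [d, h]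
  have hdinv (j : Fin n) :
      (d j)⁻¹ = (hL.eigenvalues j)⁻¹ + if hL.eigenvalues j = 0 then 1 else 0 := by
    by_cases h : hL.eigenvalues j = 0 <;> simp [d, h]
  obtain ⟨hdet, htrace⟩ := isUnit_det_and_trace_inv_of_eq_conj_diagonal
    hL.eigenvectorUnitary.2 hd
    (hL.eq_conj_diagonal_of_mulVec_eigenvectorBasis (hK.add_constProj_mulVec_eigenvectorBasis hL))
  refine ⟨hdet, ?_⟩
  rw [sumInvEig, dif_pos hL, htrace, Finset.sum_congr rfl fun j _ => hdinv j,
    Finset.sum_add_distrib, Finset.sum_boole, hK.card_eigenvalues_eq_zero hL]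
  ring

theorem sumInvEig_sub_sumInvEig_of_rank_two_update (hn : 0 < n)
    (hL : L.IsHermitian) (hL' : L'.IsHermitian) (hK : HasConstKernel L) (hK' : HasConstKernel L')
    {w : ℝ} (hw : w ≠ 0) {a b p q z : Fin n → ℝ}
    (hLL' : L' - L = w • (vecMulVec b b - vecMulVec a a))
    (hq : L *ᵥ q = b) (hp : L' *ᵥ p = a) (hz : L *ᵥ z = -w • a) (hz' : L' *ᵥ z = -w • b) :
    sumInvEig L - sumInvEig L' = z ⬝ᵥ ((1 - constProj (Fin n)) *ᵥ (p - q)) := by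
  obtain ⟨hdet, hsum⟩ := hK.sumInvEig_eq hn hL
  obtain ⟨hdet', hsum'⟩ := hK'.sumInvEig_eq hn hL'
  have ha : a = L *ᵥ (-w⁻¹ • z) := by rw [mulVec_smul, hz, smul_smul]; field_simp; simp
  have hb : b = L' *ᵥ (-w⁻¹ • z) := by rw [mulVec_smul, hz', smul_smul]; field_simp; simp
  have hsymm : (L' + constProj (Fin n))ᵀ = L' + constProj (Fin n) := by
    rw [transpose_add, constProj_transpose, ← conjTranspose_eq_transpose_of_trivial, hL'.eq]
  rw [hsum, hsum', sub_sub_sub_cancel_right,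
    trace_inv_sub_trace_inv_of_sub_eq hdet hdet' hsymm (by rwa [add_sub_add_right_eq_sub])]
  nth_rewrite 1 [hb]
  nth_rewrite 2 [ha]
  rw [← hq, ← hp]
  simp only [hK.inv_add_constProj_mulVec_mulVec hdet, hK'.inv_add_constProj_mulVec_mulVec hdet']
  set Q := 1 - constProj (Fin n)
  have hQdot (x y : Fin n → ℝ) : (Q *ᵥ x) ⬝ᵥ (Q *ᵥ y) = x ⬝ᵥ (Q *ᵥ y) := by
    have hQ : Qᵀ = Q := by rw [transpose_sub, transpose_one, constProj_transpose]
    have hQQ : Q * Q = Q := by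
      simp only [Q, Matrix.mul_sub, Matrix.sub_mul, Matrix.one_mul, Matrix.mul_one,
        constProj_mul_self, sub_self, sub_zero]
    rw [← vecMul_transpose, hQ, ← dotProduct_mulVec, mulVec_mulVec, hQQ]
  simp only [mulVec_smul, smul_dotProduct, dotProduct_smul, smul_eq_mul]
  rw [dotProduct_comm (Q *ᵥ p), hQdot, hQdot, mulVec_sub, dotProduct_sub]
  field_simp
  ring

section EdgeVec

variable {ι : Type*} [DecidableEq ι]

def edgeWeight (a b : ι) : ι → ι → ℝ := fun u v => if s(u, v) = s(a, b) then 1 else 0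

def edgeVec (a b : ι) : ι → ℝ := Pi.single a 1 - Pi.single b 1

lemma edgeVec_add_edgeVec (a b c : ι) : edgeVec a b + edgeVec b c = edgeVec a c :=
  sub_add_sub_cancel _ _ _

end EdgeVec

section WeightLap

variable {ι : Type*} [Fintype ι] [DecidableEq ι]

def weightLap (w : ι → ι → ℝ) : Matrix ι ι ℝ :=
  of fun u v => (if u = v then ∑ x, w u x else 0) - w u v

lemma edgeVec_dotProduct (a b : ι) (x : ι → ℝ) : edgeVec a b ⬝ᵥ x = x a - x b := by
  simp [edgeVec, sub_dotProduct]

lemma weightLap_add (w w' : ι → ι → ℝ) : weightLap (w + w') = weightLap w + weightLap w' := by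
  ext u v
  simp only [weightLap, of_apply, Pi.add_apply, Finset.sum_add_distrib, Matrix.add_apply]
  split_ifs <;> ring

lemma weightLap_smul (c : ℝ) (w : ι → ι → ℝ) : weightLap (c • w) = c • weightLap w := by
  ext u v
  simp only [weightLap, of_apply, Pi.smul_apply, smul_eq_mul, ← Finset.mul_sum, Matrix.smul_apply]
  split_ifs <;> ring

lemma weightLap_edgeWeight {a b : ι} (hab : a ≠ b) :
    weightLap (edgeWeight a b) = vecMulVec (edgeVec a b) (edgeVec a b) := by
  ext u v
  simp only [weightLap, edgeWeight, edgeVec, of_apply, vecMulVec_apply, Pi.sub_apply,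
    Pi.single_apply, Sym2.eq_iff]
  by_cases hua : u = a <;> by_cases hub : u = b <;> by_cases hva : v = a <;>
    by_cases hvb : v = b <;> simp_all <;> grind

lemma weightLap_mulVec_apply (w : ι → ι → ℝ) (x : ι → ℝ) (u : ι) :
    (weightLap w *ᵥ x) u = ∑ v, w u v * (x u - x v) := by
  simp only [weightLap, mulVec, dotProduct, of_apply, sub_mul, ite_mul, zero_mul, mul_sub,
    Finset.sum_sub_distrib, Finset.sum_ite_eq, Finset.mem_univ, if_true, Finset.sum_mul]

lemma weightLap_edgeWeight_mulVec {a b : ι} (hab : a ≠ b) (x : ι → ℝ) :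
    weightLap (edgeWeight a b) *ᵥ x = (x a - x b) • edgeVec a b := by
  rw [weightLap_edgeWeight hab, vecMulVec_mulVec, edgeVec_dotProduct, op_smul_eq_smul]

lemma weightLap_mulVec_eq_zero {w : ι → ι → ℝ} {x : ι → ℝ}
    (hx : ∀ u v, w u v ≠ 0 → x u = x v) : weightLap w *ᵥ x = 0 := by
  ext u
  rw [weightLap_mulVec_apply]
  refine Finset.sum_eq_zero fun v _ => ?_
  by_cases h : w u v = 0
  · rw [h, zero_mul]
  · rw [hx u v h, sub_self, mul_zero]

lemma dotProduct_weightLap_mulVec {w : ι → ι → ℝ} (hw : ∀ u v, w u v = w v u) (x : ι → ℝ) :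
    x ⬝ᵥ (weightLap w *ᵥ x) = (∑ u, ∑ v, w u v * (x u - x v) ^ 2) / 2 := by
  have hexp : x ⬝ᵥ (weightLap w *ᵥ x) = ∑ u, ∑ v, w u v * (x u * x u - x u * x v) := by
    simp only [dotProduct, weightLap_mulVec_apply, Finset.mul_sum]
    exact Finset.sum_congr rfl fun u _ => Finset.sum_congr rfl fun v _ => by ring
  have hswap : ∑ u, ∑ v, w u v * (x u * x u - x u * x v) =
      ∑ u, ∑ v, w u v * (x v * x v - x u * x v) := by
    rw [Finset.sum_comm]
    exact Finset.sum_congr rfl fun u _ => Finset.sum_congr rfl fun v _ => by rw [hw]; ring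
  have hsq : ∑ u, ∑ v, w u v * (x u - x v) ^ 2 = ∑ u, ∑ v, w u v * (x u * x u - x u * x v) +
      ∑ u, ∑ v, w u v * (x v * x v - x u * x v) := by
    simp only [← Finset.sum_add_distrib]
    exact Finset.sum_congr rfl fun u _ => Finset.sum_congr rfl fun v _ => by ring
  rw [hsq, ← hswap, hexp]
  ring

end WeightLap

namespace WGraph

variable {n : ℕ} (T : WGraph n)

lemma lap_eq_weightLap : T.lap = weightLap T.w := rfl

lemma w_eq_of_sym2_eq {u v a b : Fin n} (h : s(u, v) = s(a, b)) : T.w u v = T.w a b := by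
  rcases Sym2.eq_iff.mp h with ⟨rfl, rfl⟩ | ⟨rfl, rfl⟩
  · rfl
  · exact T.symm _ _

lemma lap_isHermitian : T.lap.IsHermitian := by
  ext u v
  simp only [conjTranspose_apply, lap, of_apply, star_trivial, T.symm v u, eq_comm (a := v)]
  split_ifs with h
  · rw [h]
  · rfl

lemma hasConstKernel_lap (hc : T.G.Connected) : HasConstKernel T.lap := by
  intro x
  refine ⟨fun hx => ?_, fun hx => weightLap_mulVec_eq_zero fun u v _ => hx u v⟩
  have hsum : ∑ u, ∑ v, T.w u v * (x u - x v) ^ 2 = 0 := by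
    have := dotProduct_weightLap_mulVec T.symm x
    rw [← lap_eq_weightLap, hx, dotProduct_zero] at this
    linarith
  have hnonneg (u v : Fin n) : 0 ≤ T.w u v * (x u - x v) ^ 2 := by
    by_cases h : T.G.Adj u v
    · exact mul_nonneg (T.pos u v h).le (sq_nonneg _)
    · rw [T.zero u v h, zero_mul]
  have hadj {u v : Fin n} (h : T.G.Adj u v) : x u = x v := by
    have hrow := (Finset.sum_eq_zero_iff_of_nonneg fun u _ =>
      Finset.sum_nonneg fun v _ => hnonneg u v).mp hsum u (Finset.mem_univ u)
    have hterm := (Finset.sum_eq_zero_iff_of_nonneg fun v _ => hnonneg u v).mp hrow v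
      (Finset.mem_univ v)
    rw [mul_eq_zero, pow_eq_zero_iff two_ne_zero, sub_eq_zero] at hterm
    exact hterm.resolve_left (T.pos u v h).ne'
  intro i j
  obtain ⟨p⟩ := hc.preconnected i j
  induction p with
  | nil => rfl
  | cons h _ ih => exact (hadj h).trans ih

end WGraph

section Reach

variable {V : Type*} (G : SimpleGraph V)

def reachInd (v : V) : V → ℝ := fun u => if G.Reachable u v then 1 else 0

lemma reachInd_self (v : V) : reachInd G v v = 1 := if_pos .rfl

lemma reachInd_of_not_reachable {u v : V} (h : ¬G.Reachable u v) : reachInd G v u = 0 := if_neg h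

lemma reachInd_eq_of_adj {u u' : V} (h : G.Adj u u') (v : V) : reachInd G v u = reachInd G v u' :=
  if_congr ⟨h.symm.reachable.trans, h.reachable.trans⟩ rfl rfl

lemma reachInd_dotProduct_reachInd [Fintype V] {v v' : V} (h : ¬G.Reachable v v') :
    reachInd G v ⬝ᵥ reachInd G v' = 0 :=
  Finset.sum_eq_zero fun u _ => by
    by_cases hu : G.Reachable u v
    · rw [reachInd_of_not_reachable G fun hu' => h (hu.symm.trans hu'), mul_zero]
    · rw [reachInd_of_not_reachable G hu, zero_mul]

lemma compSize_eq_sum_reachInd {n : ℕ} (G : SimpleGraph (Fin n)) (v : Fin n) :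
    (compSize G v : ℝ) = ∑ u, reachInd G v u := by
  have hsupp : (G.connectedComponentMk v).supp = {u | G.Reachable u v} := by
    ext u
    rw [SimpleGraph.ConnectedComponent.mem_supp_iff, Set.mem_ofPred_eq,
      SimpleGraph.ConnectedComponent.eq]
  rw [compSize, hsupp, Nat.card_coe_set_eq, Set.ncard_eq_toFinset_card', Set.toFinset_ofPred,
    Finset.card_filter]
  push_cast
  simp only [reachInd]
  congr! 2

lemma compSize_pos {n : ℕ} (G : SimpleGraph (Fin n)) (v : Fin n) : 0 < compSize G v :=
  have : Nonempty (G.connectedComponentMk v).supp := ⟨⟨v, rfl⟩⟩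
  Nat.card_pos

def deletePath (v1 v2 v3 : V) : SimpleGraph V := G.deleteEdges {s(v1, v2), s(v2, v3)}

end Reach

lemma SimpleGraph.IsTree.not_reachable_deleteEdges {V : Type*} {G : SimpleGraph V}
    (hG : G.IsTree) {x y : V} (h : G.Adj x y) : ¬(G.deleteEdges {s(x, y)}).Reachable x y :=
  SimpleGraph.isAcyclic_iff_forall_adj_isBridge.mp hG.isAcyclic h

namespace EdgeTransferAux

variable {n : ℕ} {T T' : WGraph n} {v1 v2 v3 : Fin n}

lemma sym2_ne (h : EdgeTransferAux T T' v1 v2 v3) : s(v1, v2) ≠ s(v2, v3) := by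
  simp [h.1.ne, h.2.2.1]

lemma adj_deleteEdges (h : EdgeTransferAux T T' v1 v2 v3) :
    (T.G.deleteEdges {s(v2, v3)}).Adj v2 v1 := by
  rw [SimpleGraph.deleteEdges_adj, Set.mem_singleton_iff, Sym2.eq_swap]
  exact ⟨h.1.symm, h.sym2_ne⟩

lemma not_adj_13 (hT : T.G.IsTree) (h : EdgeTransferAux T T' v1 v2 v3) : ¬T.G.Adj v1 v3 := by
  intro h13
  have hK : (T.G.deleteEdges {s(v2, v3)}).Adj v1 v3 := by
    rw [SimpleGraph.deleteEdges_adj, Set.mem_singleton_iff]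
    exact ⟨h13, by simp [h.1.ne, h.2.2.1]⟩
  exact hT.not_reachable_deleteEdges h.2.1 (h.adj_deleteEdges.reachable.trans hK.reachable)

lemma not_reachable_12 (hT : T.G.IsTree) (h : EdgeTransferAux T T' v1 v2 v3) :
    ¬(deletePath T.G v1 v2 v3).Reachable v1 v2 := fun hr =>
  hT.not_reachable_deleteEdges h.1 (hr.mono (SimpleGraph.deleteEdges_anti (by simp)))

lemma not_reachable_23 (hT : T.G.IsTree) (h : EdgeTransferAux T T' v1 v2 v3) :
    ¬(deletePath T.G v1 v2 v3).Reachable v2 v3 := fun hr =>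
  hT.not_reachable_deleteEdges h.2.1 (hr.mono (SimpleGraph.deleteEdges_anti (by simp)))

lemma not_reachable_13 (hT : T.G.IsTree) (h : EdgeTransferAux T T' v1 v2 v3) :
    ¬(deletePath T.G v1 v2 v3).Reachable v1 v3 := fun hr =>
  hT.not_reachable_deleteEdges h.2.1
    (h.adj_deleteEdges.reachable.trans (hr.mono (SimpleGraph.deleteEdges_anti (by simp))))

lemma weight_eq (hT : T.G.IsTree) (h : EdgeTransferAux T T' v1 v2 v3) :
    T'.w = T.w + T.w v2 v3 • (edgeWeight v1 v3 - edgeWeight v2 v3) := by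
  have hT13 := T.zero _ _ (h.not_adj_13 hT)
  obtain ⟨h12, h23, h13, hG', hw13, hw⟩ := h
  have hs : s(v1, v3) ≠ s(v2, v3) := by simp [h12.ne, h13]
  have hnadj' : ¬T'.G.Adj v2 v3 := by
    rw [hG']
    simp [h12.ne.symm, h23.ne]
  ext u v
  simp only [edgeWeight, Pi.add_apply, Pi.smul_apply, Pi.sub_apply, smul_eq_mul]
  by_cases e13 : s(u, v) = s(v1, v3)
  · simp [e13, hs, T.w_eq_of_sym2_eq e13, T'.w_eq_of_sym2_eq e13, hw13, hT13]
  by_cases e23 : s(u, v) = s(v2, v3)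
  · simp [e23, hs.symm, T.w_eq_of_sym2_eq e23, T'.w_eq_of_sym2_eq e23, T'.zero _ _ hnadj']
  · simp [e13, e23, hw u v e13 e23]

lemma lap_sub_lap (hT : T.G.IsTree) (h : EdgeTransferAux T T' v1 v2 v3) :
    T'.lap - T.lap = T.w v2 v3 • (vecMulVec (edgeVec v1 v3) (edgeVec v1 v3) -
      vecMulVec (edgeVec v2 v3) (edgeVec v2 v3)) := by
  rw [WGraph.lap_eq_weightLap, WGraph.lap_eq_weightLap, h.weight_eq hT, weightLap_add,
    add_sub_cancel_left, weightLap_smul, sub_eq_add_neg, ← neg_one_smul ℝ (edgeWeight v2 v3),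
    weightLap_add, weightLap_smul, weightLap_edgeWeight h.2.2.1,
    weightLap_edgeWeight h.2.1.ne, neg_one_smul, ← sub_eq_add_neg]

lemma lap_mulVec (h : EdgeTransferAux T T' v1 v2 v3) {x : Fin n → ℝ}
    (hx : ∀ u v, (deletePath T.G v1 v2 v3).Adj u v → x u = x v) :
    T.lap *ᵥ x = (T.w v1 v2 * (x v1 - x v2)) • edgeVec v1 v2 +
      (T.w v2 v3 * (x v2 - x v3)) • edgeVec v2 v3 := by
  set w1 := T.w v1 v2
  set w2 := T.w v2 v3
  set W : Fin n → Fin n → ℝ :=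
    fun u v => if s(u, v) = s(v1, v2) ∨ s(u, v) = s(v2, v3) then 0 else T.w u v
  have hsplit : T.w = W + w1 • edgeWeight v1 v2 + w2 • edgeWeight v2 v3 := by
    ext u v
    simp only [W, w1, w2, edgeWeight, Pi.add_apply, Pi.smul_apply, smul_eq_mul]
    by_cases e12 : s(u, v) = s(v1, v2)
    · simp [e12, h.sym2_ne, T.w_eq_of_sym2_eq e12]
    by_cases e23 : s(u, v) = s(v2, v3)
    · simp [e23, h.sym2_ne.symm, T.w_eq_of_sym2_eq e23]
    · simp [e12, e23]
  have hW : weightLap W *ᵥ x = 0 := by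
    refine weightLap_mulVec_eq_zero fun u v huv => hx u v ?_
    simp only [W] at huv
    split_ifs at huv with he
    · exact absurd rfl huv
    · rw [deletePath, SimpleGraph.deleteEdges_adj]
      exact ⟨by_contra fun hadj => huv (T.zero u v hadj), by simpa using he⟩
  rw [WGraph.lap_eq_weightLap, hsplit, weightLap_add, weightLap_add, add_mulVec, add_mulVec, hW,
    weightLap_smul, weightLap_smul, smul_mulVec, smul_mulVec,
    weightLap_edgeWeight_mulVec h.1.ne, weightLap_edgeWeight_mulVec h.2.1.ne, smul_smul,
    smul_smul, zero_add]

lemma lap'_mulVec (hT : T.G.IsTree) (h : EdgeTransferAux T T' v1 v2 v3) {x : Fin n → ℝ}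
    (hx : ∀ u v, (deletePath T.G v1 v2 v3).Adj u v → x u = x v) :
    T'.lap *ᵥ x = (T.w v1 v2 * (x v1 - x v2)) • edgeVec v1 v2 +
      (T.w v2 v3 * (x v1 - x v3)) • edgeVec v1 v3 := by
  rw [← sub_add_cancel T'.lap T.lap, add_mulVec, h.lap_mulVec hx, h.lap_sub_lap hT,
    smul_mulVec, sub_mulVec, vecMulVec_mulVec, vecMulVec_mulVec, edgeVec_dotProduct,
    edgeVec_dotProduct, op_smul_eq_smul, op_smul_eq_smul]
  module

lemma reachInd_deletePath_eq_zero (hT : T.G.IsTree) (h : EdgeTransferAux T T' v1 v2 v3) :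
    reachInd (deletePath T.G v1 v2 v3) v1 v2 = 0 ∧ reachInd (deletePath T.G v1 v2 v3) v1 v3 = 0 ∧
      reachInd (deletePath T.G v1 v2 v3) v2 v1 = 0 ∧ reachInd (deletePath T.G v1 v2 v3) v2 v3 = 0 ∧
      reachInd (deletePath T.G v1 v2 v3) v3 v1 = 0 ∧ reachInd (deletePath T.G v1 v2 v3) v3 v2 = 0 :=
  have h12 := h.not_reachable_12 hT
  have h23 := h.not_reachable_23 hT
  have h13 := h.not_reachable_13 hT
  ⟨reachInd_of_not_reachable _ (h12 ·.symm), reachInd_of_not_reachable _ (h13 ·.symm),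
    reachInd_of_not_reachable _ h12, reachInd_of_not_reachable _ (h23 ·.symm),
    reachInd_of_not_reachable _ h13, reachInd_of_not_reachable _ h23⟩

lemma lap_mulVec_reachInd (hT : T.G.IsTree) (h : EdgeTransferAux T T' v1 v2 v3) :
    T.lap *ᵥ reachInd (deletePath T.G v1 v2 v3) v3 = -T.w v2 v3 • edgeVec v2 v3 := by
  rw [h.lap_mulVec fun u v huv => reachInd_eq_of_adj _ huv v3]
  simp [reachInd_self, h.reachInd_deletePath_eq_zero hT]

lemma lap'_mulVec_reachInd (hT : T.G.IsTree) (h : EdgeTransferAux T T' v1 v2 v3) :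
    T'.lap *ᵥ reachInd (deletePath T.G v1 v2 v3) v3 = -T.w v2 v3 • edgeVec v1 v3 := by
  rw [h.lap'_mulVec hT fun u v huv => reachInd_eq_of_adj _ huv v3]
  simp [reachInd_self, h.reachInd_deletePath_eq_zero hT]

theorem sumInvEig_sub_sumInvEig (hT : T.G.IsTree) (hT' : T'.G.IsTree)
    (h : EdgeTransferAux T T' v1 v2 v3) :
    sumInvEig T.lap - sumInvEig T'.lap =
      compSize (deletePath T.G v1 v2 v3) v3 *
        ((compSize (deletePath T.G v1 v2 v3) v1 : ℝ) - compSize (deletePath T.G v1 v2 v3) v2) /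
          (n * T.w v1 v2) := by
  have hw1 : T.w v1 v2 ≠ 0 := (T.pos _ _ h.1).ne'
  have hw2 : T.w v2 v3 ≠ 0 := (T.pos _ _ h.2.1).ne'
  have hχ0 := h.reachInd_deletePath_eq_zero hT
  set H := deletePath T.G v1 v2 v3
  set q := -(T.w v1 v2)⁻¹ • reachInd H v2 - ((T.w v1 v2)⁻¹ + (T.w v2 v3)⁻¹) • reachInd H v3
  set p := -(T.w v1 v2)⁻¹ • reachInd H v1 - ((T.w v1 v2)⁻¹ + (T.w v2 v3)⁻¹) • reachInd H v3
  have hq : T.lap *ᵥ q = edgeVec v1 v3 := by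
    rw [h.lap_mulVec fun u v huv => by simp [q, reachInd_eq_of_adj H huv]]
    simp [q, reachInd_self, hχ0, hw1, hw2, edgeVec_add_edgeVec]
  have hp : T'.lap *ᵥ p = edgeVec v2 v3 := by
    rw [h.lap'_mulVec hT fun u v huv => by simp [p, reachInd_eq_of_adj H huv],
      ← edgeVec_add_edgeVec v1 v2 v3]
    simp [p, reachInd_self, hχ0, hw1, hw2]
  have hpq : p - q = (T.w v1 v2)⁻¹ • (reachInd H v2 - reachInd H v1) := by
    simp only [p, q]
    module
  rw [sumInvEig_sub_sumInvEig_of_rank_two_update v1.pos T.lap_isHermitian T'.lap_isHermitian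
    (T.hasConstKernel_lap hT.connected) (T'.hasConstKernel_lap hT'.connected) hw2
    (h.lap_sub_lap hT) hq hp (h.lap_mulVec_reachInd hT) (h.lap'_mulVec_reachInd hT), hpq,
    sub_mulVec, one_mulVec, dotProduct_sub, dotProduct_constProj_mulVec, dotProduct_smul,
    dotProduct_sub, reachInd_dotProduct_reachInd H (h.not_reachable_23 hT ·.symm),
    reachInd_dotProduct_reachInd H (h.not_reachable_13 hT ·.symm)]
  simp only [compSize_eq_sum_reachInd, Pi.smul_apply, Pi.sub_apply, smul_eq_mul,
    ← Finset.mul_sum, Finset.sum_sub_distrib, Fintype.card_fin]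
  field_simp
  ring

end EdgeTransferAux

theorem stmt8 {n : ℕ} (T T' : WGraph n) (hT : T.G.IsTree) (hT' : T'.G.IsTree)
    (h : ∃ v1 v2 v3 : Fin n, EdgeTransferSize T T' v1 v2 v3) :
    sumInvEig T'.lap < sumInvEig T.lap := by
  obtain ⟨v1, v2, v3, h, hsize⟩ := h
  rw [← sub_pos, h.sumInvEig_sub_sumInvEig hT hT']
  have hsize' : (compSize (deletePath T.G v1 v2 v3) v2 : ℝ) <
      compSize (deletePath T.G v1 v2 v3) v1 := by
    exact_mod_cast hsize
  have hS3 : (0 : ℝ) < compSize (deletePath T.G v1 v2 v3) v3 := by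
    exact_mod_cast compSize_pos _ v3
  have hn : (0 : ℝ) < n := by exact_mod_cast v1.pos
  exact div_pos (mul_pos hS3 (sub_pos.mpr hsize')) (mul_pos hn (T.pos _ _ h.1))
end SumInvEig
end
end

section
/- Let T be a weighted tree that edge-transfers to the weighted tree T' with respect to size, using adjacent edges e_1 = v_1v_2 and e_2 = v_2v_3 and components T_1, T_2, T_3 of T minus {e_1, e_2} containing v_1, v_2, v_3 respectively. Then S(T∖e_1) − S(T'∖e_1) = (|T_1| − |T_2|)·|T_3| > 0, where S of a 2-forest is the product of the vertex counts of its two components; moreover, for every edge e of T other than e_1 and e_2, the 2-forests T∖e and T'∖e induce the same partition of the vertex set into two components, so S(T∖e) = S(T'∖e). -/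
open scoped Classical

noncomputable section

/-!
Let `H = T ∖ {e₁, e₂}`, with components `T₁, T₂, T₃` of sizes `t₁, t₂, t₃`. Then
`T ∖ e₁ = H + v₂v₃` and `T' ∖ e₁ = H + v₁v₃`, so these 2-forests have components `T₁, T₂ ∪ T₃`
and `T₁ ∪ T₃, T₂`, and `S(T ∖ e₁) - S(T' ∖ e₁) = t₁(t₂ + t₃) - t₂(t₁ + t₃) = (t₁ - t₂)t₃`.
For any other edge `e`, `T ∖ e` and `T' ∖ e` arise from `K = T ∖ {e, e₂}` by adding `v₂v₃`,
resp. `v₁v₃`; as `e₁ ∈ K` joins `v₁` and `v₂`, both additions connect the same vertex classes.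
-/

theorem Sym2.mk_ne_mk_of_ne {α : Type*} {a b c : α} (h : a ≠ c) : s(a, b) ≠ s(b, c) := fun h' =>
  h (by rcases Sym2.eq_iff.1 h' with ⟨h₁, h₂⟩ | ⟨h₁, -⟩; exacts [h₁.trans h₂, h₁])

namespace SimpleGraph

variable {V : Type*} {G K : SimpleGraph V}

theorem reachable_sup_edge_iff {a b x y : V} :
    (K ⊔ edge a b).Reachable x y ↔ K.Reachable x y ∨
      (K.Reachable x a ∧ K.Reachable b y) ∨ (K.Reachable x b ∧ K.Reachable a y) := by
  constructor
  · rintro ⟨p⟩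
    induction p with
    | nil => exact .inl .rfl
    | @cons x z y hxz _ ih =>
      rcases hxz with hxz | hxz
      · have hxz := hxz.reachable
        rcases ih with h | ⟨h, h'⟩ | ⟨h, h'⟩
        · exact .inl (hxz.trans h)
        · exact .inr (.inl ⟨hxz.trans h, h'⟩)
        · exact .inr (.inr ⟨hxz.trans h, h'⟩)
      · obtain ⟨⟨rfl, rfl⟩ | ⟨rfl, rfl⟩, -⟩ := (edge_adj _ _ _ _).1 hxz
        · rcases ih with h | ⟨h, h'⟩ | ⟨-, h'⟩
          · exact .inr (.inl ⟨.rfl, h⟩)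
          · exact .inl (h.symm.trans h')
          · exact .inl h'
        · rcases ih with h | ⟨-, h'⟩ | ⟨h, h'⟩
          · exact .inr (.inr ⟨.rfl, h⟩)
          · exact .inl h'
          · exact .inl (h.symm.trans h')
  · have hab : (K ⊔ edge a b).Reachable a b := by
      rcases eq_or_ne a b with rfl | hne
      · exact .rfl
      · exact Adj.reachable (.inr ((edge_adj _ _ _ _).2 ⟨.inl ⟨rfl, rfl⟩, hne⟩))
    have hK {u v : V} (h : K.Reachable u v) : (K ⊔ edge a b).Reachable u v := h.mono le_sup_left
    rintro (h | ⟨h, h'⟩ | ⟨h, h'⟩)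
    · exact hK h
    · exact (hK h).trans (hab.trans (hK h'))
    · exact (hK h).trans (hab.symm.trans (hK h'))

theorem reachable_sup_edge_congr {a a' c : V} (h : K.Reachable a a')
    (x y : V) : (K ⊔ edge a c).Reachable x y ↔ (K ⊔ edge a' c).Reachable x y := by
  have h₁ : K.Reachable x a ↔ K.Reachable x a' := ⟨(·.trans h), (·.trans h.symm)⟩
  have h₂ : K.Reachable a y ↔ K.Reachable a' y := ⟨h.symm.trans, h.trans⟩
  rw [reachable_sup_edge_iff, reachable_sup_edge_iff, h₁, h₂]

theorem mem_supp_connectedComponentMk_iff {a x : V} :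
    x ∈ (K.connectedComponentMk a).supp ↔ K.Reachable x a := by
  rw [ConnectedComponent.mem_supp_iff, ConnectedComponent.eq]

theorem deleteEdges_insert_sup_edge {s : Set (Sym2 V)} {b c : V}
    (hbc : G.Adj b c) (hs : s(b, c) ∉ s) :
    G.deleteEdges (insert s(b, c) s) ⊔ edge b c = G.deleteEdges s := by
  ext x y
  simp only [sup_adj, deleteEdges_adj, edge_adj, Set.mem_insert_iff]
  constructor
  · rintro (⟨h, h'⟩ | ⟨⟨rfl, rfl⟩ | ⟨rfl, rfl⟩, -⟩)
    · exact ⟨h, fun hs => h' (.inr hs)⟩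
    · exact ⟨hbc, hs⟩
    · exact ⟨hbc.symm, Sym2.eq_swap ▸ hs⟩
  · rintro ⟨h, h'⟩
    by_cases he : s(x, y) = s(b, c)
    · exact .inr ⟨Sym2.eq_iff.1 he, h.ne⟩
    · exact .inl ⟨h, fun h'' => h''.elim he h'⟩

theorem deleteEdges_pair_sup_edge {e : Sym2 V} {b c : V} (hbc : G.Adj b c)
    (he : e ≠ s(b, c)) : G.deleteEdges {e, s(b, c)} ⊔ edge b c = G.deleteEdges {e} := by
  rw [Set.pair_comm]
  exact deleteEdges_insert_sup_edge hbc (Set.mem_singleton_iff.not.2 he.symm)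

theorem deleteEdges_singleton_sup_edge {b c : V} (hbc : G.Adj b c) :
    G.deleteEdges {s(b, c)} ⊔ edge b c = G := by
  simpa using deleteEdges_insert_sup_edge (s := ∅) hbc (Set.notMem_empty _)

section PathOfLengthTwo

variable {v₁ v₂ v₃ : V}

theorem Connected.reachable_deleteEdges_pair (hG : G.Connected) (h₁₂ : G.Adj v₁ v₂)
    (h₂₃ : G.Adj v₂ v₃) (h₁₃ : v₁ ≠ v₃) (x : V) :
    (G.deleteEdges {s(v₁, v₂), s(v₂, v₃)}).Reachable x v₁ ∨
      (G.deleteEdges {s(v₁, v₂), s(v₂, v₃)}).Reachable x v₂ ∨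
      (G.deleteEdges {s(v₁, v₂), s(v₂, v₃)}).Reachable x v₃ := by
  have hx := hG.preconnected x v₂
  rw [← deleteEdges_singleton_sup_edge h₁₂, reachable_sup_edge_iff] at hx
  rcases hx with h | ⟨h, -⟩ | ⟨h, -⟩ <;>
  · rw [← deleteEdges_pair_sup_edge h₂₃ (Sym2.mk_ne_mk_of_ne h₁₃), reachable_sup_edge_iff] at h
    tauto

theorem IsAcyclic.not_reachable_deleteEdges_pair (hG : G.IsAcyclic) (h₁₂ : G.Adj v₁ v₂)
    (h₂₃ : G.Adj v₂ v₃) (h₁₃ : v₁ ≠ v₃) :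
    ¬(G.deleteEdges {s(v₁, v₂), s(v₂, v₃)}).Reachable v₁ v₂ ∧
      ¬(G.deleteEdges {s(v₁, v₂), s(v₂, v₃)}).Reachable v₂ v₃ ∧
      ¬(G.deleteEdges {s(v₁, v₂), s(v₂, v₃)}).Reachable v₁ v₃ := by
  have hb₁ := isBridge_iff.1 (isAcyclic_iff_forall_adj_isBridge.1 hG h₁₂)
  have hb₂ := isBridge_iff.1 (isAcyclic_iff_forall_adj_isBridge.1 hG h₂₃)
  rw [← deleteEdges_pair_sup_edge h₂₃ (Sym2.mk_ne_mk_of_ne h₁₃), reachable_sup_edge_iff] at hb₁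
  rw [← deleteEdges_insert_sup_edge h₁₂ (Set.mem_singleton_iff.not.2 (Sym2.mk_ne_mk_of_ne h₁₃)),
    reachable_sup_edge_iff] at hb₂
  have := Reachable.refl (G := G.deleteEdges {s(v₁, v₂), s(v₂, v₃)}) v₂
  tauto

theorem IsAcyclic.not_adj_of_adj_of_adj (hG : G.IsAcyclic) (h₁₂ : G.Adj v₁ v₂)
    (h₂₃ : G.Adj v₂ v₃) (h₁₃ : v₁ ≠ v₃) : ¬G.Adj v₁ v₃ := fun h =>
  (hG.not_reachable_deleteEdges_pair h₁₂ h₂₃ h₁₃).2.2 <| Adj.reachable <|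
    deleteEdges_adj.2 ⟨h, by simp [h₁₂.ne, h₂₃.ne', h₁₃]⟩

end PathOfLengthTwo

end SimpleGraph

open SimpleGraph

section ComponentSize

variable {n : ℕ} {K K' : SimpleGraph (Fin n)} {a b c : Fin n}

theorem compSize_eq_ncard : compSize K a = {x | K.Reachable x a}.ncard := by
  rw [compSize, Nat.card_coe_set_eq]
  congr 1
  ext x
  exact mem_supp_connectedComponentMk_iff

theorem compSize_pos_s10 : 0 < compSize K a :=
  Nat.card_pos_iff.2 ⟨⟨a, mem_supp_connectedComponentMk_iff.2 .rfl⟩, inferInstance⟩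

theorem compSize_sup_edge_left (hbc : ¬K.Reachable b c) :
    compSize (K ⊔ edge b c) b = compSize K b + compSize K c := by
  have hsupp : {x | (K ⊔ edge b c).Reachable x b} =
      {x | K.Reachable x b} ∪ {x | K.Reachable x c} := by
    ext x
    simp only [Set.mem_ofPred_eq, Set.mem_union, reachable_sup_edge_iff]
    have := Reachable.refl (G := K) b
    tauto
  rw [compSize_eq_ncard, compSize_eq_ncard, compSize_eq_ncard, hsupp, Set.ncard_union_eq]
  exact Set.disjoint_left.2 fun x hb hc => hbc (hb.symm.trans hc)

theorem compSize_sup_edge_of_not_reachable (hab : ¬K.Reachable a b) (hac : ¬K.Reachable a c) :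
    compSize (K ⊔ edge b c) a = compSize K a := by
  rw [compSize_eq_ncard, compSize_eq_ncard]
  congr 1
  ext x
  simp only [Set.mem_ofPred_eq, reachable_sup_edge_iff]
  constructor
  · rintro (h | ⟨h, h'⟩ | ⟨h, h'⟩)
    · exact h
    · exact absurd h'.symm hac
    · exact absurd h'.symm hab
  · exact .inl

theorem SVal_eq_compSize_mul (hab : ¬K.Reachable a b)
    (hcover : ∀ x, K.Reachable x a ∨ K.Reachable x b) :
    SVal K = compSize K a * compSize K b := by
  have : Fintype K.ConnectedComponent := Fintype.ofFinite _
  have hne : K.connectedComponentMk a ≠ K.connectedComponentMk b :=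
    fun h => hab (ConnectedComponent.eq.1 h)
  have huniv : (Finset.univ : Finset K.ConnectedComponent) =
      {K.connectedComponentMk a, K.connectedComponentMk b} := by
    ext C
    induction C using ConnectedComponent.ind with
    | h x => simpa [ConnectedComponent.eq] using hcover x
  rw [SVal, finprod_eq_prod_of_fintype, huniv, Finset.prod_pair hne, compSize, compSize]

theorem SVal_sup_edge_of_three_components (hab : ¬K.Reachable a b) (hbc : ¬K.Reachable b c)
    (hac : ¬K.Reachable a c) (hcover : ∀ x, K.Reachable x a ∨ K.Reachable x b ∨ K.Reachable x c) :
    SVal (K ⊔ edge b c) = compSize K a * (compSize K b + compSize K c) := by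
  have hab' : ¬(K ⊔ edge b c).Reachable a b := by
    rw [reachable_sup_edge_iff]
    tauto
  have hcover' (x : Fin n) : (K ⊔ edge b c).Reachable x a ∨ (K ⊔ edge b c).Reachable x b := by
    simp only [reachable_sup_edge_iff]
    have := Reachable.refl (G := K) b
    have := hcover x
    tauto
  rw [SVal_eq_compSize_mul hab' hcover', compSize_sup_edge_left hbc,
    compSize_sup_edge_of_not_reachable hab hac]
  push_cast
  rfl

theorem SVal_eq_of_reachable_iff (h : ∀ x y, K.Reachable x y ↔ K'.Reachable x y) :
    SVal K = SVal K' := by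
  let e : K.ConnectedComponent ≃ K'.ConnectedComponent := Quot.congrRight h
  refine (finprod_congr fun C => ?_).trans (finprod_comp_equiv e)
  induction C using ConnectedComponent.ind with
  | h x =>
    change (compSize K x : ℝ) = compSize K' x
    simp only [compSize_eq_ncard, h]

end ComponentSize

section EdgeTransfer

variable {n : ℕ} {T T' : WGraph n} {v1 v2 v3 : Fin n}

theorem EdgeTransferAux.deleteEdges_eq (h : EdgeTransferAux T T' v1 v2 v3) {e : Sym2 (Fin n)}
    (he : e ≠ s(v1, v3)) :
    T'.G.deleteEdges {e} = T.G.deleteEdges {e, s(v2, v3)} ⊔ edge v1 v3 := by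
  rw [h.2.2.2.1, deleteEdges_sup, deleteEdges_deleteEdges, Set.union_singleton,
    deleteEdges_fromEdgeSet, Set.sdiff_singleton_eq_self (Set.mem_singleton_iff.not.2 he)]
  rfl

theorem EdgeTransferAux.SVal_sub_SVal (h : EdgeTransferAux T T' v1 v2 v3) (hT : T.G.IsTree) :
    SVal (T.G.deleteEdges {s(v1, v2)}) - SVal (T'.G.deleteEdges {s(v1, v2)}) =
      ((compSize (T.G.deleteEdges {s(v1, v2), s(v2, v3)}) v1 : ℝ) -
        compSize (T.G.deleteEdges {s(v1, v2), s(v2, v3)}) v2) *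
        compSize (T.G.deleteEdges {s(v1, v2), s(v2, v3)}) v3 := by
  have ⟨h₁₂, h₂₃, h₁₃, _⟩ := h
  obtain ⟨n₁₂, n₂₃, n₁₃⟩ := hT.isAcyclic.not_reachable_deleteEdges_pair h₁₂ h₂₃ h₁₃
  have hcover := hT.connected.reachable_deleteEdges_pair h₁₂ h₂₃ h₁₃
  rw [← deleteEdges_pair_sup_edge h₂₃ (Sym2.mk_ne_mk_of_ne h₁₃),
    h.deleteEdges_eq (by simp [h₂₃.ne, h₁₂.ne']),
    SVal_sup_edge_of_three_components n₁₂ n₂₃ n₁₃ hcover,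
    SVal_sup_edge_of_three_components (fun hr => n₁₂ hr.symm) n₁₃ n₂₃ fun x => by
      have := hcover x
      tauto]
  ring

theorem EdgeTransferAux.reachable_deleteEdges_iff (h : EdgeTransferAux T T' v1 v2 v3)
    {e : Sym2 (Fin n)} (he₁ : e ≠ s(v1, v2)) (he₂ : e ≠ s(v2, v3)) (he₃ : e ≠ s(v1, v3))
    (x y : Fin n) :
    (T.G.deleteEdges {e}).Reachable x y ↔ (T'.G.deleteEdges {e}).Reachable x y := by
  have ⟨h₁₂, h₂₃, h₁₃, _⟩ := h
  have hK₁₂ : (T.G.deleteEdges {e, s(v2, v3)}).Adj v1 v2 :=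
    deleteEdges_adj.2 ⟨h₁₂, by
      rintro (h' | h')
      exacts [he₁ h'.symm, Sym2.mk_ne_mk_of_ne h₁₃ h']⟩
  rw [← deleteEdges_pair_sup_edge h₂₃ he₂, h.deleteEdges_eq he₃]
  exact reachable_sup_edge_congr hK₁₂.reachable.symm x y

end EdgeTransfer

theorem stmt10_general {n : ℕ} (T T' : WGraph n) (hT : T.G.IsTree)
    (v1 v2 v3 : Fin n) (h : EdgeTransferSize T T' v1 v2 v3) :
    (SVal (T.G.deleteEdges {s(v1, v2)}) - SVal (T'.G.deleteEdges {s(v1, v2)}) =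
        ((compSize (T.G.deleteEdges {s(v1, v2), s(v2, v3)}) v1 : ℝ) -
          (compSize (T.G.deleteEdges {s(v1, v2), s(v2, v3)}) v2 : ℝ)) *
          (compSize (T.G.deleteEdges {s(v1, v2), s(v2, v3)}) v3 : ℝ)) ∧
    (0 < SVal (T.G.deleteEdges {s(v1, v2)}) - SVal (T'.G.deleteEdges {s(v1, v2)})) ∧
    (∀ e ∈ T.G.edgeSet, e ≠ s(v1, v2) → e ≠ s(v2, v3) →
      (∀ x y : Fin n,
          (T.G.deleteEdges {e}).Reachable x y ↔ (T'.G.deleteEdges {e}).Reachable x y) ∧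
      SVal (T.G.deleteEdges {e}) = SVal (T'.G.deleteEdges {e})) := by
  obtain ⟨h, hsize⟩ := h
  have hS := h.SVal_sub_SVal hT
  refine ⟨hS, ?_, fun e he he₁ he₂ => ?_⟩
  · rw [hS]
    exact mul_pos (sub_pos.2 (by exact_mod_cast hsize)) (by exact_mod_cast compSize_pos_s10)
  · have he₃ : e ≠ s(v1, v3) := by
      rintro rfl
      exact hT.isAcyclic.not_adj_of_adj_of_adj h.1 h.2.1 h.2.2.1 he
    have hreach := h.reachable_deleteEdges_iff he₁ he₂ he₃
    exact ⟨hreach, SVal_eq_of_reachable_iff hreach⟩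

theorem stmt10 {n : ℕ} (T T' : WGraph n) (hT : T.G.IsTree) (hT' : T'.G.IsTree)
    (v1 v2 v3 : Fin n) (h : EdgeTransferSize T T' v1 v2 v3) :
    (SVal (T.G.deleteEdges {s(v1, v2)}) - SVal (T'.G.deleteEdges {s(v1, v2)}) =
        ((compSize (T.G.deleteEdges {s(v1, v2), s(v2, v3)}) v1 : ℝ) -
          (compSize (T.G.deleteEdges {s(v1, v2), s(v2, v3)}) v2 : ℝ)) *
          (compSize (T.G.deleteEdges {s(v1, v2), s(v2, v3)}) v3 : ℝ)) ∧
    (0 < SVal (T.G.deleteEdges {s(v1, v2)}) - SVal (T'.G.deleteEdges {s(v1, v2)})) ∧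
    (∀ e ∈ T.G.edgeSet, e ≠ s(v1, v2) → e ≠ s(v2, v3) →
      (∀ x y : Fin n,
          (T.G.deleteEdges {e}).Reachable x y ↔ (T'.G.deleteEdges {e}).Reachable x y) ∧
      SVal (T.G.deleteEdges {e}) = SVal (T'.G.deleteEdges {e})) :=
  stmt10_general T T' hT v1 v2 v3 h
end
end

section
/- Let T be a weighted tree that edge-transfers to the weighted tree T' with respect to volume, using adjacent edges e_1 = v_1v_2 and e_2 = v_2v_3 (with weights ω_1 = ω(e_1), ω_2 = ω(e_2)) and components T_1, T_2, T_3 of T minus {e_1, e_2} containing v_1, v_2, v_3 respectively. Then V_T(T∖e_1) − V_{T'}(T'∖e_1) = (vol_{T_3}(T_3) + 2ω_2)·(vol_{T_1}(T_1) − vol_{T_2}(T_2)) > 0, where for a tree H and edge e, V_H(H∖e) is the product of vol_H of the two components of H∖e. -/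
/-! Write `T₁, T₂, T₃` for the components of `T ∖ {e₁, e₂}`. Deleting `e₁` splits `T` into
`T₁` and `T₂ ∪ T₃`, and splits `T'` into `T₂` and `T₁ ∪ T₃`; moreover `T' ∖ {e₁, v₁v₃}` and
`T ∖ {e₁, e₂}` are the same forest. The volume of a component in the whole tree is its
intrinsic volume plus the weights of the deleted edges at it, so with `xᵢ = vol_{Tᵢ}(Tᵢ)`:
`V_T(T ∖ e₁) = (x₁ + ω₁)(x₂ + x₃ + ω₁ + 2ω₂)` and `V_{T'}(T' ∖ e₁) = (x₂ + ω₁)(x₁ + x₃ + ω₁ + 2ω₂)`,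
whose difference is `(x₃ + 2ω₂)(x₁ - x₂)`. -/

open scoped Classical

noncomputable section

namespace SimpleGraph

variable {V : Type*} {G : SimpleGraph V}

theorem Walk.exists_reachable_deleteEdges (s : Set (Sym2 V)) {u v : V} (p : G.Walk u v) :
    ∃ x, (x = v ∨ ∃ e ∈ s, x ∈ e) ∧ (G.deleteEdges s).Reachable u x := by
  induction p with
  | nil => exact ⟨_, Or.inl rfl, .rfl⟩
  | @cons a b _ hab _ ih =>
    obtain ⟨x, hx, hbx⟩ := ih
    by_cases he : s(a, b) ∈ s
    · exact ⟨a, Or.inr ⟨_, he, Sym2.mem_mk_left a b⟩, .rfl⟩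
    · exact ⟨x, hx, (deleteEdges_adj.mpr ⟨hab, he⟩).reachable.trans hbx⟩

theorem Connected.reachable_deleteEdges_edge (hG : G.Connected) (a b u : V) :
    (G.deleteEdges {s(a, b)}).Reachable u a ∨ (G.deleteEdges {s(a, b)}).Reachable u b := by
  obtain ⟨x, hx, hux⟩ := ((hG u a).some).exists_reachable_deleteEdges {s(a, b)}
  rcases hx with rfl | ⟨e, rfl, hx⟩
  · exact .inl hux
  · rcases Sym2.mem_iff.mp hx with rfl | rfl
    · exact .inl hux
    · exact .inr hux

theorem Connected.reachable_deleteEdges_path (hG : G.Connected) (a b c u : V) :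
    (G.deleteEdges {s(a, b), s(b, c)}).Reachable u a ∨
      (G.deleteEdges {s(a, b), s(b, c)}).Reachable u b ∨
      (G.deleteEdges {s(a, b), s(b, c)}).Reachable u c := by
  obtain ⟨x, hx, hux⟩ := ((hG u a).some).exists_reachable_deleteEdges {s(a, b), s(b, c)}
  rcases hx with rfl | ⟨e, he, hx⟩
  · exact .inl hux
  · rcases he with rfl | rfl <;> rcases Sym2.mem_iff.mp hx with rfl | rfl <;> simp [hux]

theorem IsAcyclic.not_reachable_deleteEdges (hG : G.IsAcyclic) {a b : V} (hab : G.Adj a b) :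
    ¬ (G.deleteEdges {s(a, b)}).Reachable a b :=
  isAcyclic_iff_forall_adj_isBridge.mp hG hab

section Path

variable {a b c : V}

theorem adj_deleteEdges_of_path (hbc : G.Adj b c) (hac : a ≠ c) :
    (G.deleteEdges {s(a, b)}).Adj b c := by
  refine deleteEdges_adj.mpr ⟨hbc, ?_⟩
  simp [hac.symm, hbc.ne.symm]

theorem IsAcyclic.not_reachable_deleteEdges_path (hG : G.IsAcyclic) (hab : G.Adj a b)
    (hbc : G.Adj b c) (hac : a ≠ c) :
    ¬ (G.deleteEdges {s(a, b), s(b, c)}).Reachable a b ∧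
      ¬ (G.deleteEdges {s(a, b), s(b, c)}).Reachable b c ∧
      ¬ (G.deleteEdges {s(a, b), s(b, c)}).Reachable a c := by
  have hle_ab : G.deleteEdges {s(a, b), s(b, c)} ≤ G.deleteEdges {s(a, b)} :=
    deleteEdges_anti (by simp)
  have hle_bc : G.deleteEdges {s(a, b), s(b, c)} ≤ G.deleteEdges {s(b, c)} :=
    deleteEdges_anti (by simp)
  refine ⟨fun h => hG.not_reachable_deleteEdges hab (h.mono hle_ab),
    fun h => hG.not_reachable_deleteEdges hbc (h.mono hle_bc), fun h => ?_⟩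
  exact hG.not_reachable_deleteEdges hab
    ((h.mono hle_ab).trans (adj_deleteEdges_of_path hbc hac).symm.reachable)

theorem IsTree.reachable_deleteEdges_edge_iff_left (hG : G.IsTree) (hab : G.Adj a b)
    (hbc : G.Adj b c) (hac : a ≠ c) {u : V} :
    (G.deleteEdges {s(a, b)}).Reachable u a ↔ (G.deleteEdges {s(a, b), s(b, c)}).Reachable u a := by
  have hle : G.deleteEdges {s(a, b), s(b, c)} ≤ G.deleteEdges {s(a, b)} :=
    deleteEdges_anti (by simp)
  have hcb := (adj_deleteEdges_of_path hbc hac).symm.reachable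
  refine ⟨fun hua => ?_, fun hua => hua.mono hle⟩
  rcases hG.1.reachable_deleteEdges_path a b c u with h | h | h
  · exact h
  · exact absurd (hua.symm.trans (h.mono hle)) (hG.2.not_reachable_deleteEdges hab)
  · exact absurd (hua.symm.trans ((h.mono hle).trans hcb)) (hG.2.not_reachable_deleteEdges hab)

theorem IsTree.reachable_deleteEdges_edge_iff_right (hG : G.IsTree) (hab : G.Adj a b)
    (hbc : G.Adj b c) (hac : a ≠ c) {u : V} :
    (G.deleteEdges {s(a, b)}).Reachable u b ↔
      (G.deleteEdges {s(a, b), s(b, c)}).Reachable u b ∨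
        (G.deleteEdges {s(a, b), s(b, c)}).Reachable u c := by
  have hle : G.deleteEdges {s(a, b), s(b, c)} ≤ G.deleteEdges {s(a, b)} :=
    deleteEdges_anti (by simp)
  have hcb := (adj_deleteEdges_of_path hbc hac).symm.reachable
  refine ⟨fun hub => ?_, ?_⟩
  · rcases hG.1.reachable_deleteEdges_path a b c u with h | h | h
    · exact absurd ((h.mono hle).symm.trans hub) (hG.2.not_reachable_deleteEdges hab)
    · exact .inl h
    · exact .inr h
  · rintro (h | h)
    · exact h.mono hle
    · exact (h.mono hle).trans hcb

end Path

variable [Fintype V]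

def compFinset (H : SimpleGraph V) (v : V) : Finset V := (H.connectedComponentMk v).supp.toFinset

@[simp]
theorem mem_compFinset {H : SimpleGraph V} {u v : V} : u ∈ H.compFinset v ↔ H.Reachable u v := by
  simp [compFinset, ConnectedComponent.eq]

theorem finsum_mem_supp_eq_sum_compFinset {M : Type*} [AddCommMonoid M] (H : SimpleGraph V)
    (v : V) (f : V → M) :
    ∑ᶠ u ∈ (H.connectedComponentMk v).supp, f u = ∑ u ∈ H.compFinset v, f u :=
  finsum_mem_eq_toFinset_sum f _

end SimpleGraph

namespace WGraph

open SimpleGraph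

variable {n : ℕ}

theorem w_nonneg (W : WGraph n) (u v : Fin n) : 0 ≤ W.w u v := by
  by_cases h : W.G.Adj u v
  · exact (W.pos u v h).le
  · exact (W.zero u v h).ge

theorem sum_deg_eq_add_sum_compl (W : WGraph n) (A : Finset (Fin n)) :
    ∑ u ∈ A, W.deg u = ∑ u ∈ A, ∑ x ∈ A, W.w u x + ∑ u ∈ A, ∑ x ∈ Aᶜ, W.w u x := by
  rw [← Finset.sum_add_distrib]
  exact Finset.sum_congr rfl fun u _ => (Finset.sum_add_sum_compl A (W.w u)).symm

theorem sum_sum_compl_eq_sum_of_adj (W : WGraph n) (A : Finset (Fin n))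
    (P : Finset (Fin n × Fin n)) (hP : ∀ p ∈ P, p.1 ∈ A ∧ p.2 ∉ A)
    (hadj : ∀ u ∈ A, ∀ x ∉ A, W.G.Adj u x → (u, x) ∈ P) :
    ∑ u ∈ A, ∑ x ∈ Aᶜ, W.w u x = ∑ p ∈ P, W.w p.1 p.2 := by
  rw [← Finset.sum_product']
  refine (Finset.sum_subset (fun p hp => ?_) fun p hp hpP => ?_).symm
  · simpa using hP p hp
  · obtain ⟨hu, hx⟩ := Finset.mem_product.mp hp
    exact W.zero _ _ fun h => hpP (hadj _ hu _ (Finset.mem_compl.mp hx) h)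

theorem compVol_eq_sum (W : WGraph n) (H : SimpleGraph (Fin n)) (v : Fin n) :
    compVol W H v = ∑ u ∈ H.compFinset v, ∑ x ∈ H.compFinset v, W.w u x := by
  simp only [compVol, finsum_mem_supp_eq_sum_compFinset]

theorem compVol_nonneg (W : WGraph n) (H : SimpleGraph (Fin n)) (v : Fin n) :
    0 ≤ compVol W H v := by
  rw [compVol_eq_sum]
  exact Finset.sum_nonneg fun u _ => Finset.sum_nonneg fun x _ => W.w_nonneg u x

theorem compVol_congr {W W' : WGraph n} {H : SimpleGraph (Fin n)} {v : Fin n}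
    (h : ∀ u x, H.Reachable u v → H.Reachable x v → W'.w u x = W.w u x) :
    compVol W' H v = compVol W H v := by
  simp only [compVol_eq_sum]
  exact Finset.sum_congr rfl fun u hu => Finset.sum_congr rfl fun x hx =>
    h u x (mem_compFinset.mp hu) (mem_compFinset.mp hx)

theorem sum_deg_compFinset_deleteEdges (W : WGraph n) (s : Set (Sym2 (Fin n))) (v : Fin n)
    (P : Finset (Fin n × Fin n))
    (hP : ∀ p ∈ P, (W.G.deleteEdges s).Reachable p.1 v ∧ ¬ (W.G.deleteEdges s).Reachable p.2 v)
    (hs : ∀ u x, (W.G.deleteEdges s).Reachable u v → ¬ (W.G.deleteEdges s).Reachable x v →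
      s(u, x) ∈ s → (u, x) ∈ P) :
    ∑ u ∈ (W.G.deleteEdges s).compFinset v, W.deg u =
      compVol W (W.G.deleteEdges s) v + ∑ p ∈ P, W.w p.1 p.2 := by
  rw [sum_deg_eq_add_sum_compl, compVol_eq_sum, sum_sum_compl_eq_sum_of_adj W _ P]
  · simpa using hP
  · intro u hu x hx hadj
    rw [mem_compFinset] at hu hx
    by_contra hs'
    exact hx ((deleteEdges_adj.mpr ⟨hadj, fun h => hs' (hs u x hu hx h)⟩).symm.reachable.trans hu)

theorem VVal_eq_mul_of_reachable_or (W : WGraph n) {F : SimpleGraph (Fin n)} {a b : Fin n}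
    (hcover : ∀ u, F.Reachable u a ∨ F.Reachable u b) (hab : ¬ F.Reachable a b) :
    VVal W F = (∑ u ∈ F.compFinset a, W.deg u) * (∑ u ∈ F.compFinset b, W.deg u) := by
  have huniv : (Finset.univ : Finset F.ConnectedComponent) =
      {F.connectedComponentMk a, F.connectedComponentMk b} := by
    ext K
    induction K using ConnectedComponent.ind with
    | _ u => simpa [ConnectedComponent.eq] using hcover u
  have hne : F.connectedComponentMk a ≠ F.connectedComponentMk b :=
    fun h => hab (ConnectedComponent.eq.mp h)
  rw [VVal, finprod_eq_prod_of_fintype, huniv, Finset.prod_pair hne,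
    finsum_mem_supp_eq_sum_compFinset, finsum_mem_supp_eq_sum_compFinset]

section Path

variable (W : WGraph n) {a b c : Fin n}

theorem sum_deg_compFinset_path_end (hW : W.G.IsAcyclic) (hab : W.G.Adj a b)
    (hbc : W.G.Adj b c) (hac : a ≠ c) :
    ∑ u ∈ (W.G.deleteEdges {s(a, b), s(b, c)}).compFinset a, W.deg u =
      compVol W (W.G.deleteEdges {s(a, b), s(b, c)}) a + W.w a b := by
  obtain ⟨hnab, -, hnac⟩ := hW.not_reachable_deleteEdges_path hab hbc hac
  rw [sum_deg_compFinset_deleteEdges W _ a {(a, b)}, Finset.sum_singleton]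
  · simpa [reachable_comm] using hnab
  · intro u x hu hx he
    rcases he with he | he <;> rcases Sym2.eq_iff.mp he with ⟨rfl, rfl⟩ | ⟨rfl, rfl⟩
    · simp
    · exact absurd .rfl hx
    · exact absurd hu.symm hnab
    · exact absurd hu.symm hnac

theorem sum_deg_compFinset_path_middle (hW : W.G.IsAcyclic) (hab : W.G.Adj a b)
    (hbc : W.G.Adj b c) (hac : a ≠ c) :
    ∑ u ∈ (W.G.deleteEdges {s(a, b), s(b, c)}).compFinset b, W.deg u =
      compVol W (W.G.deleteEdges {s(a, b), s(b, c)}) b + (W.w b a + W.w b c) := by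
  obtain ⟨hnab, hnbc, -⟩ := hW.not_reachable_deleteEdges_path hab hbc hac
  have hne : (b, a) ≠ (b, c) := by simp [hac]
  rw [sum_deg_compFinset_deleteEdges W _ b {(b, a), (b, c)}, Finset.sum_pair hne]
  · simpa [reachable_comm] using ⟨hnab, hnbc⟩
  · intro u x hu hx he
    rcases he with he | he <;> rcases Sym2.eq_iff.mp he with ⟨rfl, rfl⟩ | ⟨rfl, rfl⟩
    · exact absurd hu hnab
    · simp
    · simp
    · exact absurd hu.symm hnbc

theorem VVal_deleteEdges_eq_of_isTree (hW : W.G.IsTree) (hab : W.G.Adj a b)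
    (hbc : W.G.Adj b c) (hac : a ≠ c) :
    VVal W (W.G.deleteEdges {s(a, b)}) =
      (compVol W (W.G.deleteEdges {s(a, b), s(b, c)}) a + W.w a b) *
        (compVol W (W.G.deleteEdges {s(a, b), s(b, c)}) b + (W.w b a + W.w b c) +
          (compVol W (W.G.deleteEdges {s(a, b), s(b, c)}) c + W.w c b)) := by
  have hcover u := hW.1.reachable_deleteEdges_edge a b u
  obtain ⟨-, hnbc, -⟩ := hW.2.not_reachable_deleteEdges_path hab hbc hac
  have hleft : (W.G.deleteEdges {s(a, b)}).compFinset a =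
      (W.G.deleteEdges {s(a, b), s(b, c)}).compFinset a := by
    ext u
    simpa using hW.reachable_deleteEdges_edge_iff_left hab hbc hac
  have hright : (W.G.deleteEdges {s(a, b)}).compFinset b =
      (W.G.deleteEdges {s(a, b), s(b, c)}).compFinset b ∪
        (W.G.deleteEdges {s(a, b), s(b, c)}).compFinset c := by
    ext u
    simpa using hW.reachable_deleteEdges_edge_iff_right hab hbc hac
  have hdisj : Disjoint ((W.G.deleteEdges {s(a, b), s(b, c)}).compFinset b)
      ((W.G.deleteEdges {s(a, b), s(b, c)}).compFinset c) :=
    Finset.disjoint_left.mpr fun u hb hc =>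
      hnbc ((mem_compFinset.mp hb).symm.trans (mem_compFinset.mp hc))
  have hpath : ({s(c, b), s(b, a)} : Set (Sym2 (Fin n))) = {s(a, b), s(b, c)} := by
    rw [Set.pair_comm, Sym2.eq_swap, Sym2.eq_swap (a := c)]
  have hend_c := W.sum_deg_compFinset_path_end hW.2 hbc.symm hab.symm hac.symm
  rw [hpath] at hend_c
  rw [W.VVal_eq_mul_of_reachable_or hcover (hW.2.not_reachable_deleteEdges hab), hleft, hright,
    Finset.sum_union hdisj, W.sum_deg_compFinset_path_end hW.2 hab hbc hac,
    W.sum_deg_compFinset_path_middle hW.2 hab hbc hac, hend_c]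

end Path

end WGraph

namespace EdgeTransferAux

open SimpleGraph

variable {n : ℕ} {T T' : WGraph n} {v1 v2 v3 : Fin n}

theorem adj_edge₁ (h : EdgeTransferAux T T' v1 v2 v3) : T'.G.Adj v2 v1 := by
  obtain ⟨h12, h23, h13, hG', -⟩ := h
  rw [hG']
  refine .inl (deleteEdges_adj.mpr ⟨h12.symm, ?_⟩)
  simp [h13, h23.ne]

theorem adj_new_edge (h : EdgeTransferAux T T' v1 v2 v3) : T'.G.Adj v1 v3 := by
  rw [h.2.2.2.1]
  exact .inr ((fromEdgeSet_adj _).mpr ⟨rfl, h.2.2.1⟩)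

theorem w_edge₁ (h : EdgeTransferAux T T' v1 v2 v3) : T'.w v1 v2 = T.w v1 v2 := by
  obtain ⟨h12, h23, h13, -, -, hw⟩ := h
  exact hw v1 v2 (by simp [h23.ne, h13]) (by simp [h12.ne, h13])

theorem deleteEdges_eq_s11 (h : EdgeTransferAux T T' v1 v2 v3) (hT : T.G.IsAcyclic) :
    T'.G.deleteEdges {s(v2, v1), s(v1, v3)} = T.G.deleteEdges {s(v1, v2), s(v2, v3)} := by
  obtain ⟨h12, h23, h13, hG', -⟩ := h
  have hn13 : ¬ T.G.Adj v1 v3 := fun h13' =>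
    (hT.not_reachable_deleteEdges_path h12 h23 h13).2.2
      (deleteEdges_adj.mpr ⟨h13', by simp [h12.ne, h23.ne.symm]⟩).reachable
  ext u x
  simp only [hG', deleteEdges_adj, sup_adj, fromEdgeSet_adj, Set.mem_insert_iff,
    Set.mem_singleton_iff, Sym2.eq_swap (a := v2) (b := v1)]
  constructor
  · rintro ⟨⟨hux, hux'⟩ | ⟨he, -⟩, hne⟩
    · tauto
    · exact absurd (.inr he) hne
  · rintro ⟨hux, hne⟩
    refine ⟨.inl ⟨hux, by tauto⟩, not_or.mpr ⟨fun h => hne (.inl h), fun he => ?_⟩⟩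
    rcases Sym2.eq_iff.mp he with ⟨rfl, rfl⟩ | ⟨rfl, rfl⟩
    exacts [hn13 hux, hn13 hux.symm]

theorem compVol_eq (h : EdgeTransferAux T T' v1 v2 v3) (hT : T.G.IsAcyclic) (v : Fin n) :
    compVol T' (T.G.deleteEdges {s(v1, v2), s(v2, v3)}) v =
      compVol T (T.G.deleteEdges {s(v1, v2), s(v2, v3)}) v := by
  obtain ⟨h12, h23, h13, -, -, hw⟩ := h
  obtain ⟨-, hn23, hn13⟩ := hT.not_reachable_deleteEdges_path h12 h23 h13
  refine WGraph.compVol_congr fun u x hu hx => hw u x ?_ ?_ <;> intro he <;>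
    rcases Sym2.eq_iff.mp he with ⟨rfl, rfl⟩ | ⟨rfl, rfl⟩
  exacts [hn13 (hu.trans hx.symm), hn13 (hx.trans hu.symm), hn23 (hu.trans hx.symm),
    hn23 (hx.trans hu.symm)]

theorem VVal_eq (h : EdgeTransferAux T T' v1 v2 v3) (hT : T.G.IsAcyclic) (hT' : T'.G.IsTree) :
    VVal T' (T'.G.deleteEdges {s(v1, v2)}) =
      (compVol T (T.G.deleteEdges {s(v1, v2), s(v2, v3)}) v2 + T.w v1 v2) *
        (compVol T (T.G.deleteEdges {s(v1, v2), s(v2, v3)}) v1 + (T.w v1 v2 + T.w v2 v3) +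
          (compVol T (T.G.deleteEdges {s(v1, v2), s(v2, v3)}) v3 + T.w v2 v3)) := by
  have hV := T'.VVal_deleteEdges_eq_of_isTree hT' h.adj_edge₁ h.adj_new_edge h.2.1.ne
  rw [h.deleteEdges_eq_s11 hT, Sym2.eq_swap, h.compVol_eq hT, h.compVol_eq hT, h.compVol_eq hT,
    T'.symm v2 v1, h.w_edge₁, T'.symm v3 v1, h.2.2.2.2.1] at hV
  exact hV

end EdgeTransferAux

theorem stmt11 {n : ℕ} (T T' : WGraph n) (hT : T.G.IsTree) (hT' : T'.G.IsTree)
    (v1 v2 v3 : Fin n) (h : EdgeTransferVol T T' v1 v2 v3) :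
    (VVal T (T.G.deleteEdges {s(v1, v2)}) - VVal T' (T'.G.deleteEdges {s(v1, v2)}) =
        (compVol T (T.G.deleteEdges {s(v1, v2), s(v2, v3)}) v3 + 2 * T.w v2 v3) *
          (compVol T (T.G.deleteEdges {s(v1, v2), s(v2, v3)}) v1 -
            compVol T (T.G.deleteEdges {s(v1, v2), s(v2, v3)}) v2)) ∧
    (0 < VVal T (T.G.deleteEdges {s(v1, v2)}) - VVal T' (T'.G.deleteEdges {s(v1, v2)})) := by
  obtain ⟨hAux, hlt⟩ := h
  have h23 : T.G.Adj v2 v3 := hAux.2.1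
  have hpos : 0 < compVol T (T.G.deleteEdges {s(v1, v2), s(v2, v3)}) v3 + 2 * T.w v2 v3 := by
    linarith [T.compVol_nonneg (T.G.deleteEdges {s(v1, v2), s(v2, v3)}) v3, T.pos v2 v3 h23]
  rw [T.VVal_deleteEdges_eq_of_isTree hT hAux.1 h23 hAux.2.2.1, hAux.VVal_eq hT.2 hT',
    T.symm v2 v1, T.symm v3 v2]
  exact ⟨by ring, by linarith [mul_pos hpos (sub_pos.mpr hlt)]⟩
end
end
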